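/- arXiv:2409.18960 — 3 statements merged into one kernel-verified Lean document; each statement's English description precedes it below -/
import Mathlib

section
/- In ℤ[t, t⁻¹, w, w⁻¹], for every natural number n ≥ 1: (w⁻¹ - t⁻⁴w)·(w^{n+1} - t^{-4n}w^{-n+1}) - (w - t⁻⁴w⁻¹)·(w^{-n-1} - t^{-4n}w^{n-1}) = (w - t⁻⁴w⁻¹)·(w⁻¹ - t⁻⁴w)·(w - w⁻¹)·Σ_{k=0}^{n-1} t^{-4k}·S_{n-2k-1}(w + w⁻¹), where S_m is the normalized Chebyshev polynomial of the second kind (extended to negative indices by S_{-m} = -S_{m-2}). -/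
open LaurentPolynomial

private lemma Tmul {A : Type*} [CommSemiring A] (a b c : ℤ) (h : a + b = c) :
    (T a * T b : LaurentPolynomial A) = T c := by
  rw [← h]; exact (T_add a b).symm

open LaurentPolynomial in
theorem partial_fraction_chebyshev_sum (S : ℤ → Polynomial ℤ)
    (hS0 : S 0 = 1) (hS1 : S 1 = Polynomial.X)
    (hS : ∀ n : ℤ, S (n + 1) = Polynomial.X * S n - S (n - 1)) (n : ℕ) (hn : 1 ≤ n) :
    ((T (-1) - C (T (-4)) * T 1) * (T ((n : ℤ) + 1) - C (T (-4 * (n : ℤ))) * T (-(n : ℤ) + 1)) -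
        (T 1 - C (T (-4)) * T (-1)) *
          (T (-(n : ℤ) - 1) - C (T (-4 * (n : ℤ))) * T ((n : ℤ) - 1))
        : LaurentPolynomial (LaurentPolynomial ℤ)) =
      (T 1 - C (T (-4)) * T (-1)) * (T (-1) - C (T (-4)) * T 1) * (T 1 - T (-1)) *
        ∑ k ∈ Finset.range n, C (T (-4 * (k : ℤ))) *
          Polynomial.aeval (T 1 + T (-1) : LaurentPolynomial (LaurentPolynomial ℤ))
            (S ((n : ℤ) - 2 * k - 1)) := by
  set L := LaurentPolynomial (LaurentPolynomial ℤ) with hL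
  set w : L := T 1 + T (-1) with hw
  set q : L := C (T (-4)) with hq
  set A : L := T 1 - q * T (-1) with hA
  set B : L := T (-1) - q * T 1 with hB
  have hSneg1 : S (-1) = 0 := by
    have h := hS 0
    rw [show (0:ℤ)+1 = 1 by ring, show (0:ℤ)-1 = -1 by ring, hS0, hS1] at h
    linear_combination h
  have hSdown : ∀ m : ℤ, S (m - 1) = Polynomial.X * S m - S (m + 1) := by
    intro m; linear_combination hS m
  -- Chebyshev evaluation lemma
  have key : ∀ m : ℤ,
      (T 1 - T (-1)) * Polynomial.aeval w (S m) = T (m + 1) - T (-(m + 1)) ∧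
      (T 1 - T (-1)) * Polynomial.aeval w (S (m - 1)) = T m - T (-m) := by
    intro m
    induction m using Int.induction_on with
    | zero =>
      constructor
      · rw [hS0]; simp
      · rw [show (0:ℤ)-1 = -1 by ring, hSneg1]; simp
    | succ i ih =>
      obtain ⟨h1, h2⟩ := ih
      refine ⟨?_, by rw [show ((i:ℤ) + 1) - 1 = (i:ℤ) by ring]; exact h1⟩
      rw [hS i]
      simp only [map_sub, map_mul, Polynomial.aeval_X]
      have e1 : (T 1 : L) * T ((i:ℤ) + 1) = T ((i:ℤ) + 1 + 1) := Tmul _ _ _ (by ring)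
      have e2 : (T (-1) : L) * T ((i:ℤ) + 1) = T (i:ℤ) := Tmul _ _ _ (by ring)
      have e3 : (T 1 : L) * T (-((i:ℤ) + 1)) = T (-(i:ℤ)) := Tmul _ _ _ (by ring)
      have e4 : (T (-1) : L) * T (-((i:ℤ) + 1)) = T (-((i:ℤ) + 1 + 1)) := Tmul _ _ _ (by ring)
      rw [hw]
      linear_combination (T 1 + T (-1) : L) * h1 - h2 + e1 + e2 - e3 - e4
    | pred i ih =>
      obtain ⟨h1, h2⟩ := ih
      constructor
      · have h2' := h2
        rw [show -(-(i:ℤ)) = (i:ℤ) by ring] at h2'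
        rw [show (-(i:ℤ) - 1) + 1 = -(i:ℤ) by ring, show -(-(i:ℤ)) = (i:ℤ) by ring]
        exact h2'
      · rw [hSdown (-(i:ℤ) - 1)]
        simp only [map_sub, map_mul, Polynomial.aeval_X]
        rw [show (-(i:ℤ) - 1) + 1 = -(i:ℤ) by ring]
        have e1 : (T 1 : L) * T (-(i:ℤ)) = T (-(i:ℤ) + 1) := Tmul _ _ _ (by ring)
        have e2 : (T (-1) : L) * T (-(i:ℤ)) = T (-(i:ℤ) - 1) := Tmul _ _ _ (by ring)
        have h2' := h2
        rw [show -(-(i:ℤ)) = (i:ℤ) by ring] at h2'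
        have h1' := h1
        rw [show -(-(i:ℤ) + 1) = (i:ℤ) - 1 by ring] at h1'
        rw [hw, show -(-(i:ℤ) - 1) = (i:ℤ) + 1 by ring]
        have e3 : (T 1 : L) * T ((i:ℤ)) = T ((i:ℤ) + 1) := Tmul _ _ _ (by ring)
        have e4 : (T (-1) : L) * T ((i:ℤ)) = T ((i:ℤ) - 1) := Tmul _ _ _ (by ring)
        linear_combination (T 1 + T (-1) : L) * h2' - h1' + e1 + e2 - e3 - e4
  have hqpow : ∀ k : ℕ, (C (T (-4 * (k:ℤ))) : L) = q ^ k := by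
    intro k
    rw [hq, ← map_pow, T_pow]
    congr 2
    push_cast; ring
  have hsum : (T 1 - T (-1) : L) * (∑ k ∈ Finset.range n, C (T (-4 * (k : ℤ))) *
      Polynomial.aeval w (S ((n : ℤ) - 2 * k - 1))) =
      ∑ k ∈ Finset.range n, q ^ k * (T ((n:ℤ) - 2*k) - T (2*(k:ℤ) - n)) := by
    rw [Finset.mul_sum]
    refine Finset.sum_congr rfl fun k _ => ?_
    rw [hqpow k]
    have hk := (key ((n:ℤ) - 2*k - 1)).1
    rw [show ((n:ℤ) - 2*k - 1) + 1 = (n:ℤ) - 2*k by ring,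
      show -((n:ℤ) - 2*(k:ℤ)) = 2*(k:ℤ) - n by ring] at hk
    linear_combination q^k * hk
  have hsplit : (∑ k ∈ Finset.range n, q ^ k * (T ((n:ℤ) - 2*k) - T (2*(k:ℤ) - n)) : L) =
      (∑ k ∈ Finset.range n, q ^ k * T ((n:ℤ) - 2*k)) -
      ∑ k ∈ Finset.range n, q ^ k * T (2*(k:ℤ) - n) := by
    rw [← Finset.sum_sub_distrib]
    exact Finset.sum_congr rfl fun k _ => by ring
  have tel1 : A * ∑ k ∈ Finset.range n, q ^ k * T ((n:ℤ) - 2*k) =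
      T ((n:ℤ) + 1) - q ^ n * T (-(n:ℤ) + 1) := by
    have ht := Finset.sum_range_sub' (fun k : ℕ => (q ^ k * T ((n:ℤ) + 1 - 2*k) : L)) n
    have step : ∀ k ∈ Finset.range n, A * (q ^ k * T ((n:ℤ) - 2*k)) =
        (q ^ k * T ((n:ℤ) + 1 - 2*(k:ℤ)) : L) - q ^ (k+1) * T ((n:ℤ) + 1 - 2*((k+1 : ℕ):ℤ)) := by
      intro k _
      have e1 : (T 1 : L) * T ((n:ℤ) - 2*k) = T ((n:ℤ) + 1 - 2*(k:ℤ)) := Tmul _ _ _ (by ring)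
      have e2 : (T (-1) : L) * T ((n:ℤ) - 2*k) = T ((n:ℤ) + 1 - 2*((k:ℤ)+1)) := Tmul _ _ _ (by ring)
      rw [hA]
      push_cast
      linear_combination q^k * e1 - q * q^k * e2
    rw [Finset.mul_sum, Finset.sum_congr rfl step, ht]
    simp only [Nat.cast_zero, mul_zero, sub_zero, pow_zero, one_mul]
    rw [show (n:ℤ) + 1 - 2*(n:ℤ) = -(n:ℤ) + 1 by ring]
  have tel2 : B * ∑ k ∈ Finset.range n, q ^ k * T (2*(k:ℤ) - n) =
      T (-(n:ℤ) - 1) - q ^ n * T ((n:ℤ) - 1) := by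
    have ht := Finset.sum_range_sub' (fun k : ℕ => (q ^ k * T (2*(k:ℤ) - n - 1) : L)) n
    have step : ∀ k ∈ Finset.range n, B * (q ^ k * T (2*(k:ℤ) - n)) =
        (q ^ k * T (2*(k:ℤ) - n - 1) : L) - q ^ (k+1) * T (2*((k+1 : ℕ):ℤ) - n - 1) := by
      intro k _
      have e1 : (T (-1) : L) * T (2*(k:ℤ) - n) = T (2*(k:ℤ) - n - 1) := Tmul _ _ _ (by ring)
      have e2 : (T 1 : L) * T (2*(k:ℤ) - n) = T (2*((k:ℤ)+1) - n - 1) := Tmul _ _ _ (by ring)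
      rw [hB]
      push_cast
      linear_combination q^k * e1 - q * q^k * e2
    rw [Finset.mul_sum, Finset.sum_congr rfl step, ht]
    simp only [Nat.cast_zero, mul_zero, zero_sub, pow_zero, one_mul]
    rw [show 2*(n:ℤ) - (n:ℤ) - 1 = (n:ℤ) - 1 by ring]
  rw [hqpow n]
  linear_combination (-(A*B)) * hsum - (A*B) * hsplit - B * tel1 + A * tel2
end

section
/- Let R = ℂ[t, t⁻¹, x, y, z] and define the sequence (X_i)_{i≥0} in R by X_0 = -t² - t⁻², X_1 = -t⁴y - t²xz, and X_{i+2} = t²y·X_{i+1} - t⁴·X_i - 2t²xz. Then for every i ≥ 0: X_i = -t^{2i+2}S_i(y) - t^{2i}·xz·S_{i-1}(y) + t^{2i-2}S_{i-2}(y) - 2t^{2i-2}·xz·Σ_{k=0}^{i-2} t^{-2k}·S_{i-k-2}(y), where S_m denotes the normalized Chebyshev polynomial of the second kind evaluated at y (with S_{-1} = 0, S_{-2} = -1). -/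
open LaurentPolynomial in
theorem skein_Xi_formula (S : ℤ → Polynomial ℤ)
    (hS0 : S 0 = 1) (hS1 : S 1 = Polynomial.X)
    (hS : ∀ n : ℤ, S (n + 1) = Polynomial.X * S n - S (n - 1))
    (Xi : ℕ → MvPolynomial (Fin 3) (LaurentPolynomial ℂ)) :
    let x := (MvPolynomial.X 0 : MvPolynomial (Fin 3) (LaurentPolynomial ℂ))
    let y := (MvPolynomial.X 1 : MvPolynomial (Fin 3) (LaurentPolynomial ℂ))
    let z := (MvPolynomial.X 2 : MvPolynomial (Fin 3) (LaurentPolynomial ℂ))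
    let tp : ℤ → MvPolynomial (Fin 3) (LaurentPolynomial ℂ) := fun k => MvPolynomial.C (T k)
    let sv : ℤ → MvPolynomial (Fin 3) (LaurentPolynomial ℂ) :=
      fun m => Polynomial.aeval y (S m)
    Xi 0 = -tp 2 - tp (-2) →
    Xi 1 = -tp 4 * y - tp 2 * x * z →
    (∀ i : ℕ, Xi (i + 2) = tp 2 * y * Xi (i + 1) - tp 4 * Xi i - 2 * tp 2 * x * z) →
    ∀ i : ℕ,
      Xi i = -tp (2 * i + 2) * sv i - tp (2 * i) * x * z * sv (i - 1)
        + tp (2 * i - 2) * sv (i - 2)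
        - 2 * tp (2 * i - 2) * x * z *
            ∑ k ∈ Finset.range (i - 1), tp (-2 * k) * sv ((i : ℤ) - k - 2) := by
  intro x y z tp sv h0 h1 hrec
  have hsv : ∀ n : ℤ, sv (n + 1) = y * sv n - sv (n - 1) := by
    intro n
    show Polynomial.aeval y (S (n + 1)) =
      y * Polynomial.aeval y (S n) - Polynomial.aeval y (S (n - 1))
    rw [hS n, map_sub, map_mul, Polynomial.aeval_X]
  have hsv0 : sv 0 = 1 := by
    show Polynomial.aeval y (S 0) = 1
    rw [hS0, map_one]
  have hsv1 : sv 1 = y := by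
    show Polynomial.aeval y (S 1) = y
    rw [hS1, Polynomial.aeval_X]
  have hsvm1 : sv (-1) = 0 := by
    have h := hsv 0
    norm_num at h
    rw [hsv0, hsv1] at h
    linear_combination h
  have hsvm2 : sv (-2) = -1 := by
    have h := hsv (-1)
    norm_num at h
    rw [hsv0, hsvm1] at h
    linear_combination h
  have hsv' : ∀ n : ℤ, sv n = y * sv (n - 1) - sv (n - 2) := by
    intro n
    have h := hsv (n - 1)
    have e1 : n - 1 + 1 = n := by ring
    have e2 : n - 1 - 1 = n - 2 := by ring
    rw [e1, e2] at h
    exact h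
  have htp : ∀ a b : ℤ, tp a * tp b = tp (a + b) := by
    intro a b
    show MvPolynomial.C (T a) * MvPolynomial.C (T b) = MvPolynomial.C (T (a + b))
    rw [← map_mul, T_add]
  have htp0 : tp 0 = 1 := by
    show MvPolynomial.C (T 0) = 1
    rw [T_zero, map_one]
  intro i
  induction i using Nat.twoStepInduction with
  | zero =>
    rw [h0]
    norm_num [hsv0, hsvm1, hsvm2]
    ring
  | one =>
    rw [h1]
    norm_num [hsv0, hsv1, hsvm1, htp0]
  | more i ih ih1 =>
    rw [hrec i, ih, ih1]
    push_cast
    simp only [show i + 2 - 1 = i + 1 from rfl, show i + 1 - 1 = i from rfl,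
      show ∀ k : ℤ, (i : ℤ) + 2 - k - 2 = (i : ℤ) - k from fun k => by ring,
      show ∀ k : ℤ, (i : ℤ) + 1 - k - 2 = (i : ℤ) - k - 1 from fun k => by ring,
      show (2 : ℤ) * ((i : ℤ) + 2) + 2 = 2 * (i : ℤ) + 6 from by ring,
      show (2 : ℤ) * ((i : ℤ) + 2) - 2 = 2 * (i : ℤ) + 2 from by ring,
      show (2 : ℤ) * ((i : ℤ) + 2) = 2 * (i : ℤ) + 4 from by ring,
      show (2 : ℤ) * ((i : ℤ) + 1) + 2 = 2 * (i : ℤ) + 4 from by ring,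
      show (2 : ℤ) * ((i : ℤ) + 1) - 2 = 2 * (i : ℤ) from by ring,
      show (2 : ℤ) * ((i : ℤ) + 1) = 2 * (i : ℤ) + 2 from by ring,
      show (i : ℤ) + 2 - 1 = (i : ℤ) + 1 from by ring,
      show (i : ℤ) + 2 - 2 = (i : ℤ) from by ring,
      show (i : ℤ) + 1 - 1 = (i : ℤ) from by ring,
      show (i : ℤ) + 1 - 2 = (i : ℤ) - 1 from by ring,
      show (2 : ℤ) * (i : ℤ) + 2 + 2 = 2 * (i : ℤ) + 4 from by ring,
      show (2 : ℤ) * (i : ℤ) + 4 + 2 = 2 * (i : ℤ) + 6 from by ring,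
      show (2 : ℤ) * (i : ℤ) + 2 - 2 = 2 * (i : ℤ) from by ring,
      show (2 : ℤ) * (i : ℤ) + 4 - 2 = 2 * (i : ℤ) + 2 from by ring]
    rw [Finset.sum_range_succ]
    simp only [sub_self, hsv0, mul_one]
    have hsplitk : ∀ k : ℕ, sv ((i : ℤ) - (k : ℤ)) =
        y * sv ((i : ℤ) - (k : ℤ) - 1) - sv ((i : ℤ) - (k : ℤ) - 2) := fun k => hsv' _
    simp only [hsplitk]
    have hsum1 : (∑ k ∈ Finset.range i,
        tp (-2 * (k : ℤ)) * (y * sv ((i : ℤ) - (k : ℤ) - 1) - sv ((i : ℤ) - (k : ℤ) - 2))) =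
        y * (∑ k ∈ Finset.range i, tp (-2 * (k : ℤ)) * sv ((i : ℤ) - (k : ℤ) - 1)) -
        (∑ k ∈ Finset.range i, tp (-2 * (k : ℤ)) * sv ((i : ℤ) - (k : ℤ) - 2)) := by
      rw [Finset.mul_sum, ← Finset.sum_sub_distrib]
      exact Finset.sum_congr rfl fun k _ => by ring
    rw [hsum1]
    have hDC : (∑ k ∈ Finset.range i, tp (-2 * (k : ℤ)) * sv ((i : ℤ) - (k : ℤ) - 2)) =
        ∑ k ∈ Finset.range (i - 1), tp (-2 * (k : ℤ)) * sv ((i : ℤ) - (k : ℤ) - 2) := by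
      cases i with
      | zero => rfl
      | succ n =>
        rw [Finset.sum_range_succ]
        have e : ((n + 1 : ℕ) : ℤ) - (n : ℤ) - 2 = -1 := by push_cast; ring
        rw [e, hsvm1, mul_zero, add_zero, Nat.succ_sub_one]
    rw [hDC]
    have hA : sv ((i : ℤ) + 2) = y * sv ((i : ℤ) + 1) - sv (i : ℤ) := by
      have h := hsv ((i : ℤ) + 1)
      rwa [show (i : ℤ) + 1 + 1 = (i : ℤ) + 2 from by ring,
        show (i : ℤ) + 1 - 1 = (i : ℤ) from by ring] at h
    have hB : sv ((i : ℤ) + 1) = y * sv (i : ℤ) - sv ((i : ℤ) - 1) := hsv (i : ℤ)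
    have hC : sv (i : ℤ) = y * sv ((i : ℤ) - 1) - sv ((i : ℤ) - 2) := hsv' (i : ℤ)
    simp only [hA, hB, hC]
    have r1 : tp 2 * tp (2 * (i : ℤ) + 4) = tp (2 * (i : ℤ) + 6) :=
      (htp _ _).trans (congrArg tp (by ring))
    have r2 : tp 2 * tp (2 * (i : ℤ) + 2) = tp (2 * (i : ℤ) + 4) :=
      (htp _ _).trans (congrArg tp (by ring))
    have r3 : tp 2 * tp (2 * (i : ℤ)) = tp (2 * (i : ℤ) + 2) :=
      (htp _ _).trans (congrArg tp (by ring))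
    have r4 : tp 4 * tp (2 * (i : ℤ) + 2) = tp (2 * (i : ℤ) + 6) :=
      (htp _ _).trans (congrArg tp (by ring))
    have r5 : tp 4 * tp (2 * (i : ℤ)) = tp (2 * (i : ℤ) + 4) :=
      (htp _ _).trans (congrArg tp (by ring))
    have r6 : tp 4 * tp (2 * (i : ℤ) - 2) = tp (2 * (i : ℤ) + 2) :=
      (htp _ _).trans (congrArg tp (by ring))
    have r7 : tp (2 * (i : ℤ) + 2) * tp (-2 * (i : ℤ)) = tp 2 :=
      (htp _ _).trans (congrArg tp (by ring))
    set SB := (∑ k ∈ Finset.range i, tp (-2 * (k : ℤ)) * sv ((i : ℤ) - (k : ℤ) - 1)) with hSB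
    set SC := (∑ k ∈ Finset.range (i - 1), tp (-2 * (k : ℤ)) * sv ((i : ℤ) - (k : ℤ) - 2)) with hSC
    set s1 := sv ((i : ℤ) - 1) with hs1
    set s2 := sv ((i : ℤ) - 2) with hs2
    linear_combination (-(y * (y * (y * s1 - s2) - s1))) * r1 - (x * z * y * (y * s1 - s2)) * r2 +
      (y * s1 - 2 * x * z * y * SB) * r3 + (y * s1 - s2) * r4 + (x * z * s1) * r5 +
      (2 * x * z * SC - s2) * r6 + (2 * x * z) * r7
end

section
/- Let R = ℂ[t, t⁻¹, x, y, z] and define sequences F, G : ℕ → R by F(0) = -t⁴y - t²xz, G(0) = -t² - t⁻², F(n+1) = t⁴y·F(n) + (t⁻² - t⁶)·G(n) + (1 - t⁴)(x² + z²)·yⁿ, and G(n+1) = (t² - t⁻⁶)·F(n) + t⁻⁴y·G(n) + 2(1 - t⁻⁴)·xz·yⁿ. Extend F linearly over ℂ[t,t⁻¹,x,z] to polynomial arguments in y via Φ(yⁿ) = F(n). Then for every n ≥ 1: Φ(T_n(y)) = -t^{4n+4}S_{n+1}(y) - t^{-4n}S_{n-1}(y) + t^{4n}S_{n-1}(y)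 + t^{-4n+4}S_{n-3}(y) - t^{4n+2}·xz·S_n(y) + t^{-4n+2}·xz·S_{n-2}(y) + (1 - t^{4n})·Σ_{k=0}^{n-1} t^{-4k}(x² + z²)·S_{n-2k-1}(y) + 2(1 - t^{4n})·Σ_{k=0}^{n-1} t^{-4k-2}·xz·S_{n-2k-2}(y). -/
section ChebAux
variable {R : Type*} [CommRing R]

/-- partial geometric-Chebyshev sum -/
def ASum (sv : ℤ → R) (c : R) (m : ℕ) (a : ℤ) : R :=
  ∑ k ∈ Finset.range m, c ^ k * sv (a - 2 * k)

lemma ASum_one (sv : ℤ → R) (c : R) (a : ℤ) : ASum sv c 1 a = sv a := by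
  simp [ASum]

lemma ASum_bot (sv : ℤ → R) (c : R) (m : ℕ) (a : ℤ) :
    ASum sv c (m + 1) a = sv a + c * ASum sv c m (a - 2) := by
  rw [ASum, Finset.sum_range_succ', ASum, Finset.mul_sum, add_comm]
  congr 1
  · simp
  · refine Finset.sum_congr rfl fun k _ => ?_
    rw [show a - 2 * ((k + 1 : ℕ) : ℤ) = a - 2 - 2 * k by push_cast; ring]
    ring

lemma ASum_top (sv : ℤ → R) (c : R) (m : ℕ) (a : ℤ) :
    ASum sv c (m + 1) a = ASum sv c m a + c ^ m * sv (a - 2 * m) := by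
  rw [ASum, Finset.sum_range_succ, ASum]

lemma ASum_shift (sv : ℤ → R) (c : R) (m : ℕ) (a : ℤ) :
    ASum sv c m a = c * ASum sv c m (a - 2) + sv a - c ^ m * sv (a - 2 * m) := by
  have h1 := ASum_bot sv c m a
  have h2 := ASum_top sv c m a
  linear_combination h1 - h2

lemma ASum_y (sv : ℤ → R) (y : R) (hy : ∀ b : ℤ, y * sv b = sv (b + 1) + sv (b - 1))
    (c : R) (m : ℕ) (a : ℤ) :
    y * ASum sv c m a = ASum sv c m (a + 1) + ASum sv c m (a - 1) := by
  rw [ASum, Finset.mul_sum, ASum, ASum, ← Finset.sum_add_distrib]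
  refine Finset.sum_congr rfl fun k _ => ?_
  have h := hy (a - 2 * k)
  rw [show a - 2 * (k : ℤ) + 1 = a + 1 - 2 * k by ring,
      show a - 2 * (k : ℤ) - 1 = a - 1 - 2 * k by ring] at h
  calc y * (c ^ k * sv (a - 2 * k)) = c ^ k * (y * sv (a - 2 * k)) := by ring
  _ = c ^ k * (sv (a + 1 - 2 * k) + sv (a - 1 - 2 * k)) := by rw [h]
  _ = _ := by ring

lemma ASum_reflect (sv : ℤ → R) (q r : R) (hqr : q * r = 1)
    (hneg : ∀ a : ℤ, sv (-a) = -sv (a - 2)) (m : ℕ) (a : ℤ) :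
    q ^ (2 * m) * ASum sv (r ^ 2) m a
      = -(q ^ 2 * ASum sv (q ^ 2) m (2 * (m : ℤ) - a - 4)) := by
  rw [ASum, Finset.mul_sum, ← Finset.sum_range_reflect, ASum, Finset.mul_sum,
    ← Finset.sum_neg_distrib]
  refine Finset.sum_congr rfl fun k hk => ?_
  have hk' : k < m := Finset.mem_range.mp hk
  have h1 : sv (a - 2 * ((m : ℤ) - 1 - k)) = -sv (2 * (m : ℤ) - a - 4 - 2 * k) := by
    rw [show a - 2 * ((m : ℤ) - 1 - k) = -(2 * (m : ℤ) - a - 2 - 2 * k) by ring, hneg,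
        show 2 * (m : ℤ) - a - 2 - 2 * (k : ℤ) - 2 = 2 * (m : ℤ) - a - 4 - 2 * k by ring]
  have hcast : ((m - 1 - k : ℕ) : ℤ) = (m : ℤ) - 1 - k := by omega
  rw [hcast]
  have hpow : q ^ (2 * m) * (r ^ 2) ^ (m - 1 - k) = q ^ (2 * k + 2) := by
    have e : 2 * m = 2 * (m - 1 - k) + (2 * k + 2) := by omega
    have h2 : q ^ (2 * (m - 1 - k)) * r ^ (2 * (m - 1 - k)) = 1 := by
      rw [← mul_pow, hqr, one_pow]
    rw [e, pow_add]
    linear_combination q ^ (2 * k + 2) * h2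
  rw [h1]
  linear_combination (-sv (2 * (m:ℤ) - a - 4 - 2*k)) * hpow

/-- canonical form of Φ(T_{j+1}) -/
def CFdef (q r x y z : R) (sv : ℤ → R) (j : ℕ) : R :=
  -(q ^ (2*j+4) * sv ((j:ℤ)+2)) + q ^ (2*j+2) * sv (j:ℤ) - r ^ (2*j+2) * sv (j:ℤ)
    + r ^ (2*j) * sv ((j:ℤ)-2)
    - q ^ (2*j+3) * (x*z) * sv ((j:ℤ)+1) + r ^ (2*j+1) * (x*z) * sv ((j:ℤ)-1)
    + (x^2+z^2) * (ASum sv (r^2) (j+1) (j:ℤ) + q^2 * ASum sv (q^2) (j+1) ((j:ℤ)-2))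
    + 2*(x*z) * (r * ASum sv (r^2) (j+1) ((j:ℤ)-1) + q * ASum sv (q^2) (j+1) ((j:ℤ)-1))

/-- canonical form of Ψ(T_{j+1}) -/
def CGdef (q r x y z : R) (sv : ℤ → R) (j : ℕ) : R :=
  -((q ^ (2*j+3) + r ^ (2*j+3)) * sv ((j:ℤ)+1)) + (q ^ (2*j+1) + r ^ (2*j+1)) * sv ((j:ℤ)-1)
    - (q ^ (2*j+2) + r ^ (2*j+2)) * (x*z) * sv (j:ℤ) - 2*(x*z) * sv (j:ℤ)
    + (x^2+z^2) * (q * ASum sv (q^2) (j+1) ((j:ℤ)-1) + r * ASum sv (r^2) (j+1) ((j:ℤ)-1))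
    + 2*(x*z) * (ASum sv (q^2) (j+1) (j:ℤ) + ASum sv (r^2) (j+1) (j:ℤ))

end ChebAux

section SAux
variable (S : ℤ → Polynomial ℤ)

lemma Sm1 (hS0 : S 0 = 1) (hS1 : S 1 = Polynomial.X)
    (hS : ∀ n : ℤ, S (n + 1) = Polynomial.X * S n - S (n - 1)) : S (-1) = 0 := by
  have h := hS 0
  norm_num at h
  rw [hS0, hS1] at h
  linear_combination h

lemma Sm2 (hS0 : S 0 = 1) (hS1 : S 1 = Polynomial.X)
    (hS : ∀ n : ℤ, S (n + 1) = Polynomial.X * S n - S (n - 1)) : S (-2) = -1 := by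
  have h := hS (-1)
  norm_num at h
  rw [hS0, Sm1 S hS0 hS1 hS] at h
  linear_combination h

lemma Sneg (hS0 : S 0 = 1) (hS1 : S 1 = Polynomial.X)
    (hS : ∀ n : ℤ, S (n + 1) = Polynomial.X * S n - S (n - 1)) :
    ∀ a : ℤ, S (-a) = -S (a - 2) := by
  have key : ∀ m : ℕ, S (-(m : ℤ) - 1) = -S ((m : ℤ) - 1) := by
    intro m
    induction m using Nat.twoStepInduction with
    | zero =>
      norm_num [Sm1 S hS0 hS1 hS]
    | one =>
      norm_num [Sm2 S hS0 hS1 hS, hS0]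
    | more m ih1 ih2 =>
      have hrec := hS (-(m : ℤ) - 2)
      rw [show -(m : ℤ) - 2 + 1 = -(m : ℤ) - 1 by ring,
          show -(m : ℤ) - 2 - 1 = -(m : ℤ) - 3 by ring] at hrec
      have hrec2 := hS ((m : ℤ))
      rw [show (-(↑(m + 1) : ℤ) - 1) = -(m : ℤ) - 2 by push_cast; ring,
          show ((↑(m + 1) : ℤ) - 1) = (m : ℤ) by push_cast; ring] at ih2
      rw [show (-(↑(m + 2) : ℤ) - 1) = -(m : ℤ) - 3 by push_cast; ring,
          show ((↑(m + 2) : ℤ) - 1) = (m : ℤ) + 1 by push_cast; ring]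
      rw [ih2, ih1] at hrec
      linear_combination hrec + hrec2
  intro a
  rcases le_or_gt 1 a with h | h
  · obtain ⟨m, rfl⟩ : ∃ m : ℕ, a = (m : ℤ) + 1 := ⟨(a - 1).toNat, by omega⟩
    have hk := key m
    rw [show -((m : ℤ) + 1) = -(m : ℤ) - 1 by ring,
        show ((m : ℤ) + 1) - 2 = (m : ℤ) - 1 by ring]
    exact hk
  · obtain ⟨m, hm⟩ : ∃ m : ℕ, 2 - a = (m : ℤ) + 1 := ⟨(1 - a).toNat, by omega⟩
    have h2 := key m
    rw [show -(m : ℤ) - 1 = a - 2 by omega, show (m : ℤ) - 1 = -a by omega] at h2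
    linear_combination h2

lemma Scoeff (hS0 : S 0 = 1) (hS1 : S 1 = Polynomial.X)
    (hS : ∀ n : ℤ, S (n + 1) = Polynomial.X * S n - S (n - 1)) :
    ∀ m : ℕ, ∀ k : ℕ, m < k → (S (m : ℤ)).coeff k = 0 := by
  intro m
  induction m using Nat.twoStepInduction with
  | zero =>
    intro k hk
    rw [show ((0 : ℕ) : ℤ) = 0 by norm_num, hS0, Polynomial.coeff_one]
    simp only [ite_eq_right_iff]
    omega
  | one =>
    intro k hk
    rw [show ((1 : ℕ) : ℤ) = 1 by norm_num, hS1, Polynomial.coeff_X]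
    simp only [ite_eq_right_iff]
    omega
  | more m ih1 ih2 =>
    intro k hk
    have hrec := hS ((m : ℤ) + 1)
    rw [show ((m : ℤ) + 1) + 1 = ((m + 2 : ℕ) : ℤ) by push_cast; ring,
        show ((m : ℤ) + 1) - 1 = ((m : ℕ) : ℤ) by push_cast; ring,
        show ((m : ℤ) + 1) = ((m + 1 : ℕ) : ℤ) by push_cast; ring] at hrec
    rw [hrec, Polynomial.coeff_sub]
    obtain ⟨k', rfl⟩ : ∃ k', k = k' + 1 := ⟨k - 1, by omega⟩
    rw [Polynomial.coeff_X_mul]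
    rw [ih2 k' (by omega), ih1 (k' + 1) (by omega)]
    ring

end SAux

lemma transferF {R : Type*} [CommRing R] (q r x y z : R) (sv : ℤ → R) (j : ℕ)
    (hqr : q * r = 1) (hy : ∀ b : ℤ, y * sv b = sv (b + 1) + sv (b - 1))
    (hneg : ∀ a : ℤ, sv (-a) = -sv (a - 2)) :
    CFdef q r x y z sv (j+2) = q^2 * y * CFdef q r x y z sv (j+1)
      + (r - q^3) * CGdef q r x y z sv (j+1)
      + (1 - q^2) * (x^2+z^2) * (sv ((j:ℤ)+2) - sv ((j:ℤ))) - CFdef q r x y z sv j := by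
  simp only [CFdef, CGdef, Nat.cast_add, Nat.cast_one, Nat.cast_ofNat,
    show j+1+1 = j+2 from rfl, show j+2+1 = j+3 from rfl,
    show ((j:ℤ)+2)+2 = (j:ℤ)+4 by ring, show ((j:ℤ)+2)-2 = ((j:ℤ)) by ring,
    show ((j:ℤ)+2)+1 = (j:ℤ)+3 by ring, show ((j:ℤ)+2)-1 = (j:ℤ)+1 by ring,
    show ((j:ℤ)+1)+2 = (j:ℤ)+3 by ring, show ((j:ℤ)+1)-2 = (j:ℤ)-1 by ring,
    show ((j:ℤ)+1)+1 = (j:ℤ)+2 by ring, show ((j:ℤ)+1)-1 = ((j:ℤ)) by ring]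
  have hshift_Aq_m1 : ASum sv (q^2) (j+1) ((j:ℤ)-1) = (q^2) * ASum sv (q^2) (j+1) ((j:ℤ)-3) + sv ((j:ℤ)-1) + q^(2*j+2) * sv ((j:ℤ)+1) := by
    have h := ASum_shift sv (q^2) (j+1) ((j:ℤ)-1)
    rw [show ((j:ℤ)-1) - 2 = ((j:ℤ)-3) by ring, show ((j:ℤ)-1) - 2*((j+1:ℕ):ℤ) = -(((j:ℤ)+3)) by push_cast; ring, hneg, show ((j:ℤ)+3) - 2 = ((j:ℤ)+1) by ring] at h
    linear_combination h
  have hshift_Aq_m2 : ASum sv (q^2) (j+1) ((j:ℤ)-2) = (q^2) * ASum sv (q^2) (j+1) ((j:ℤ)-4) + sv ((j:ℤ)-2) + q^(2*j+2) * sv ((j:ℤ)+2) := by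
    have h := ASum_shift sv (q^2) (j+1) ((j:ℤ)-2)
    rw [show ((j:ℤ)-2) - 2 = ((j:ℤ)-4) by ring, show ((j:ℤ)-2) - 2*((j+1:ℕ):ℤ) = -(((j:ℤ)+4)) by push_cast; ring, hneg, show ((j:ℤ)+4) - 2 = ((j:ℤ)+2) by ring] at h
    linear_combination h
  have hshift_Aq_0 : ASum sv (q^2) (j+1) ((j:ℤ)) = (q^2) * ASum sv (q^2) (j+1) ((j:ℤ)-2) + sv ((j:ℤ)) + q^(2*j+2) * sv ((j:ℤ)) := by
    have h := ASum_shift sv (q^2) (j+1) ((j:ℤ))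
    rw [show ((j:ℤ)) - 2*((j+1:ℕ):ℤ) = -(((j:ℤ)+2)) by push_cast; ring, hneg, show ((j:ℤ)+2) - 2 = ((j:ℤ)) by ring] at h
    linear_combination h
  have hshift_Aq_1 : ASum sv (q^2) (j+1) ((j:ℤ)+1) = (q^2) * ASum sv (q^2) (j+1) ((j:ℤ)-1) + sv ((j:ℤ)+1) + q^(2*j+2) * sv ((j:ℤ)-1) := by
    have h := ASum_shift sv (q^2) (j+1) ((j:ℤ)+1)
    rw [show ((j:ℤ)+1) - 2 = ((j:ℤ)-1) by ring, show ((j:ℤ)+1) - 2*((j+1:ℕ):ℤ) = -(((j:ℤ)+1)) by push_cast; ring, hneg, show ((j:ℤ)+1) - 2 = ((j:ℤ)-1) by ring] at h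
    linear_combination h
  have hshift_Aq_2 : ASum sv (q^2) (j+1) ((j:ℤ)+2) = (q^2) * ASum sv (q^2) (j+1) ((j:ℤ)) + sv ((j:ℤ)+2) + q^(2*j+2) * sv ((j:ℤ)-2) := by
    have h := ASum_shift sv (q^2) (j+1) ((j:ℤ)+2)
    rw [show ((j:ℤ)+2) - 2 = ((j:ℤ)) by ring, show ((j:ℤ)+2) - 2*((j+1:ℕ):ℤ) = -(((j:ℤ))) by push_cast; ring, hneg] at h
    linear_combination h
  have hshift_Ar_m1 : ASum sv (r^2) (j+1) ((j:ℤ)-1) = (r^2) * ASum sv (r^2) (j+1) ((j:ℤ)-3) + sv ((j:ℤ)-1) + r^(2*j+2) * sv ((j:ℤ)+1) := by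
    have h := ASum_shift sv (r^2) (j+1) ((j:ℤ)-1)
    rw [show ((j:ℤ)-1) - 2 = ((j:ℤ)-3) by ring, show ((j:ℤ)-1) - 2*((j+1:ℕ):ℤ) = -(((j:ℤ)+3)) by push_cast; ring, hneg, show ((j:ℤ)+3) - 2 = ((j:ℤ)+1) by ring] at h
    linear_combination h
  have hshift_Ar_0 : ASum sv (r^2) (j+1) ((j:ℤ)) = (r^2) * ASum sv (r^2) (j+1) ((j:ℤ)-2) + sv ((j:ℤ)) + r^(2*j+2) * sv ((j:ℤ)) := by
    have h := ASum_shift sv (r^2) (j+1) ((j:ℤ))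
    rw [show ((j:ℤ)) - 2*((j+1:ℕ):ℤ) = -(((j:ℤ)+2)) by push_cast; ring, hneg, show ((j:ℤ)+2) - 2 = ((j:ℤ)) by ring] at h
    linear_combination h
  have hshift_Ar_1 : ASum sv (r^2) (j+1) ((j:ℤ)+1) = (r^2) * ASum sv (r^2) (j+1) ((j:ℤ)-1) + sv ((j:ℤ)+1) + r^(2*j+2) * sv ((j:ℤ)-1) := by
    have h := ASum_shift sv (r^2) (j+1) ((j:ℤ)+1)
    rw [show ((j:ℤ)+1) - 2 = ((j:ℤ)-1) by ring, show ((j:ℤ)+1) - 2*((j+1:ℕ):ℤ) = -(((j:ℤ)+1)) by push_cast; ring, hneg, show ((j:ℤ)+1) - 2 = ((j:ℤ)-1) by ring] at h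
    linear_combination h
  have hshift_Ar_2 : ASum sv (r^2) (j+1) ((j:ℤ)+2) = (r^2) * ASum sv (r^2) (j+1) ((j:ℤ)) + sv ((j:ℤ)+2) + r^(2*j+2) * sv ((j:ℤ)-2) := by
    have h := ASum_shift sv (r^2) (j+1) ((j:ℤ)+2)
    rw [show ((j:ℤ)+2) - 2 = ((j:ℤ)) by ring, show ((j:ℤ)+2) - 2*((j+1:ℕ):ℤ) = -(((j:ℤ))) by push_cast; ring, hneg] at h
    linear_combination h
  have hstrip_Aq2_m1 : ASum sv (q^2) (j+2) ((j:ℤ)-1) = sv ((j:ℤ)-1) + (q^2) * ASum sv (q^2) (j+1) ((j:ℤ)-3) := by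
    have h := ASum_bot sv (q^2) (j+1) ((j:ℤ)-1)
    rw [show ((j:ℤ)-1) - 2 = ((j:ℤ)-3) by ring] at h
    exact h
  have hstrip_Aq2_m2 : ASum sv (q^2) (j+2) ((j:ℤ)-2) = sv ((j:ℤ)-2) + (q^2) * ASum sv (q^2) (j+1) ((j:ℤ)-4) := by
    have h := ASum_bot sv (q^2) (j+1) ((j:ℤ)-2)
    rw [show ((j:ℤ)-2) - 2 = ((j:ℤ)-4) by ring] at h
    exact h
  have hstrip_Aq2_0 : ASum sv (q^2) (j+2) ((j:ℤ)) = sv ((j:ℤ)) + (q^2) * ASum sv (q^2) (j+1) ((j:ℤ)-2) := by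
    have h := ASum_bot sv (q^2) (j+1) ((j:ℤ))
    exact h
  have hstrip_Aq2_1 : ASum sv (q^2) (j+2) ((j:ℤ)+1) = sv ((j:ℤ)+1) + (q^2) * ASum sv (q^2) (j+1) ((j:ℤ)-1) := by
    have h := ASum_bot sv (q^2) (j+1) ((j:ℤ)+1)
    rw [show ((j:ℤ)+1) - 2 = ((j:ℤ)-1) by ring] at h
    exact h
  have hstrip_Aq3_0 : ASum sv (q^2) (j+3) ((j:ℤ)) = sv ((j:ℤ)) + (q^2) * ASum sv (q^2) (j+2) ((j:ℤ)-2) := by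
    have h := ASum_bot sv (q^2) (j+2) ((j:ℤ))
    exact h
  have hstrip_Aq3_1 : ASum sv (q^2) (j+3) ((j:ℤ)+1) = sv ((j:ℤ)+1) + (q^2) * ASum sv (q^2) (j+2) ((j:ℤ)-1) := by
    have h := ASum_bot sv (q^2) (j+2) ((j:ℤ)+1)
    rw [show ((j:ℤ)+1) - 2 = ((j:ℤ)-1) by ring] at h
    exact h
  have hstrip_Ar2_m1 : ASum sv (r^2) (j+2) ((j:ℤ)-1) = sv ((j:ℤ)-1) + (r^2) * ASum sv (r^2) (j+1) ((j:ℤ)-3) := by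
    have h := ASum_bot sv (r^2) (j+1) ((j:ℤ)-1)
    rw [show ((j:ℤ)-1) - 2 = ((j:ℤ)-3) by ring] at h
    exact h
  have hstrip_Ar2_0 : ASum sv (r^2) (j+2) ((j:ℤ)) = sv ((j:ℤ)) + (r^2) * ASum sv (r^2) (j+1) ((j:ℤ)-2) := by
    have h := ASum_bot sv (r^2) (j+1) ((j:ℤ))
    exact h
  have hstrip_Ar2_1 : ASum sv (r^2) (j+2) ((j:ℤ)+1) = sv ((j:ℤ)+1) + (r^2) * ASum sv (r^2) (j+1) ((j:ℤ)-1) := by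
    have h := ASum_bot sv (r^2) (j+1) ((j:ℤ)+1)
    rw [show ((j:ℤ)+1) - 2 = ((j:ℤ)-1) by ring] at h
    exact h
  have hstrip_Ar3_1 : ASum sv (r^2) (j+3) ((j:ℤ)+1) = sv ((j:ℤ)+1) + (r^2) * ASum sv (r^2) (j+2) ((j:ℤ)-1) := by
    have h := ASum_bot sv (r^2) (j+2) ((j:ℤ)+1)
    rw [show ((j:ℤ)+1) - 2 = ((j:ℤ)-1) by ring] at h
    exact h
  have hstrip_Ar3_2 : ASum sv (r^2) (j+3) ((j:ℤ)+2) = sv ((j:ℤ)+2) + (r^2) * ASum sv (r^2) (j+2) ((j:ℤ)) := by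
    have h := ASum_bot sv (r^2) (j+2) ((j:ℤ)+2)
    rw [show ((j:ℤ)+2) - 2 = ((j:ℤ)) by ring] at h
    exact h
  have hyA_Aq_0 : y * (ASum sv (q^2) (j+1) ((j:ℤ))) = ASum sv (q^2) (j+1) ((j:ℤ)+1) + ASum sv (q^2) (j+1) ((j:ℤ)-1) := by
    have h := ASum_y sv y hy (q^2) (j+1) ((j:ℤ))
    exact h
  have hyA_Aq_1 : y * (ASum sv (q^2) (j+1) ((j:ℤ)+1)) = ASum sv (q^2) (j+1) ((j:ℤ)+2) + ASum sv (q^2) (j+1) ((j:ℤ)) := by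
    have h := ASum_y sv y hy (q^2) (j+1) ((j:ℤ)+1)
    rw [show ((j:ℤ)+1) + 1 = ((j:ℤ)+2) by ring, show ((j:ℤ)+1) - 1 = ((j:ℤ)) by ring] at h
    exact h
  have hyA_Ar_0 : y * (ASum sv (r^2) (j+1) ((j:ℤ))) = ASum sv (r^2) (j+1) ((j:ℤ)+1) + ASum sv (r^2) (j+1) ((j:ℤ)-1) := by
    have h := ASum_y sv y hy (r^2) (j+1) ((j:ℤ))
    exact h
  have hyA_Ar_1 : y * (ASum sv (r^2) (j+1) ((j:ℤ)+1)) = ASum sv (r^2) (j+1) ((j:ℤ)+2) + ASum sv (r^2) (j+1) ((j:ℤ)) := by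
    have h := ASum_y sv y hy (r^2) (j+1) ((j:ℤ)+1)
    rw [show ((j:ℤ)+1) + 1 = ((j:ℤ)+2) by ring, show ((j:ℤ)+1) - 1 = ((j:ℤ)) by ring] at h
    exact h
  have hys_m1 : y * sv ((j:ℤ)-1) = sv ((j:ℤ)) + sv ((j:ℤ)-2) := by
    have h := hy ((j:ℤ)-1)
    rw [show ((j:ℤ)-1) + 1 = ((j:ℤ)) by ring, show ((j:ℤ)-1) - 1 = ((j:ℤ)-2) by ring] at h
    exact h
  have hys_0 : y * sv ((j:ℤ)) = sv ((j:ℤ)+1) + sv ((j:ℤ)-1) := by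
    have h := hy ((j:ℤ))
    exact h
  have hys_1 : y * sv ((j:ℤ)+1) = sv ((j:ℤ)+2) + sv ((j:ℤ)) := by
    have h := hy ((j:ℤ)+1)
    rw [show ((j:ℤ)+1) + 1 = ((j:ℤ)+2) by ring, show ((j:ℤ)+1) - 1 = ((j:ℤ)) by ring] at h
    exact h
  have hys_2 : y * sv ((j:ℤ)+2) = sv ((j:ℤ)+3) + sv ((j:ℤ)+1) := by
    have h := hy ((j:ℤ)+2)
    rw [show ((j:ℤ)+2) + 1 = ((j:ℤ)+3) by ring, show ((j:ℤ)+2) - 1 = ((j:ℤ)+1) by ring] at h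
    exact h
  have hys_3 : y * sv ((j:ℤ)+3) = sv ((j:ℤ)+4) + sv ((j:ℤ)+2) := by
    have h := hy ((j:ℤ)+3)
    rw [show ((j:ℤ)+3) + 1 = ((j:ℤ)+4) by ring, show ((j:ℤ)+3) - 1 = ((j:ℤ)+2) by ring] at h
    exact h
  linear_combination (norm := ring1) ((-2)*(ASum sv (q^2) (j+1) ((j:ℤ)-1))*q*x*z + (2)*(ASum sv (q^2) (j+1) ((j:ℤ)-1))*q^3*r^2*x*z + (-2)*(ASum sv (q^2) (j+1) ((j:ℤ)-1))*q^5*x*z + (-2)*(ASum sv (q^2) (j+1) ((j:ℤ)-1))*q^6*r*x*z + (ASum sv (q^2) (j+1) ((j:ℤ)-1))*q^6*r^2*x^2*y + (ASum sv (q^2) (j+1) ((j:ℤ)-1))*q^6*r^2*y*z^2 + (ASum sv (q^2) (j+1) ((j:ℤ)-1))*q^7*r^3*x^2*y + (ASum sv (q^2) (j+1) ((j:ℤ)-1))*q^7*r^3*y*z^2 - (ASum sv (q^2) (j+1) ((j:ℤ)-2))*q^2*x^2 - (ASum sv (q^2) (j+1) ((j:ℤ)-2))*q^2*z^2 + (ASum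 sv (q^2) (j+1) ((j:ℤ)-2))*q^4*r^2*x^2 + (ASum sv (q^2) (j+1) ((j:ℤ)-2))*q^4*r^2*z^2 + (2)*(ASum sv (q^2) (j+1) ((j:ℤ)-2))*q^5*x*y*z + (2)*(ASum sv (q^2) (j+1) ((j:ℤ)-2))*q^6*r*x*y*z - (ASum sv (q^2) (j+1) ((j:ℤ)-2))*q^6*r^2*x^2 - (ASum sv (q^2) (j+1) ((j:ℤ)-2))*q^6*r^2*z^2 - (ASum sv (q^2) (j+1) ((j:ℤ)-2))*q^6*x^2 - (ASum sv (q^2) (j+1) ((j:ℤ)-2))*q^6*z^2 - (ASum sv (q^2) (j+1) ((j:ℤ)-2))*q^7*r*x^2 - (ASum sv (q^2) (j+1) ((j:ℤ)-2))*q^7*r*z^2 - (ASum sv (q^2) (j+1) ((j:ℤ)-2))*q^7*r^3*x^2 - (ASum sv (q^2) (j+1) ((j:ℤ)-2))*q^7*r^3*z^2 + (-2)*(ASum sv (q^2) (j+1) ((j:ℤ)-3))*q^5*x*z + (-2)*(ASum sv (q^2) (j+1) ((j:ℤ)-3))*q^6*r*x*z + (ASum sv (q^2) (j+1) ((j:ℤ)-3))*q^6*x^2*y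 + (ASum sv (q^2) (j+1) ((j:ℤ)-3))*q^6*y*z^2 + (ASum sv (q^2) (j+1) ((j:ℤ)-3))*q^7*r*x^2*y + (ASum sv (q^2) (j+1) ((j:ℤ)-3))*q^7*r*y*z^2 - (ASum sv (q^2) (j+1) ((j:ℤ)-4))*q^6*x^2 - (ASum sv (q^2) (j+1) ((j:ℤ)-4))*q^6*z^2 - (ASum sv (q^2) (j+1) ((j:ℤ)-4))*q^7*r*x^2 - (ASum sv (q^2) (j+1) ((j:ℤ)-4))*q^7*r*z^2 - (ASum sv (q^2) (j+1) ((j:ℤ)))*q^2*r^2*x^2 - (ASum sv (q^2) (j+1) ((j:ℤ)))*q^2*r^2*z^2 - (ASum sv (q^2) (j+1) ((j:ℤ)))*q^6*r^2*x^2 - (ASum sv (q^2) (j+1) ((j:ℤ)))*q^6*r^2*z^2 - (ASum sv (q^2) (j+1) ((j:ℤ)))*q^7*r^3*x^2 - (ASum sv (q^2) (j+1) ((j:ℤ)))*q^7*r^3*z^2 + (-2)*(ASum sv (q^2) (j+1) ((j:ℤ)+1))*q*r^2*x*z + (-2)*(ASum sv (r^2) (j+1) ((j:ℤ)-1))*q*r^2*x*z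 + (2)*(ASum sv (r^2) (j+1) ((j:ℤ)-1))*q*r^4*x*z + (ASum sv (r^2) (j+1) ((j:ℤ)-1))*q^2*r^2*x^2*y + (ASum sv (r^2) (j+1) ((j:ℤ)-1))*q^2*r^2*y*z^2 + (-2)*(ASum sv (r^2) (j+1) ((j:ℤ)-1))*q^2*r^5*x*z + (-2)*(ASum sv (r^2) (j+1) ((j:ℤ)-1))*q^3*r^2*x*z + (ASum sv (r^2) (j+1) ((j:ℤ)-1))*q^3*r^3*x^2*y + (ASum sv (r^2) (j+1) ((j:ℤ)-1))*q^3*r^3*y*z^2 + (-2)*(ASum sv (r^2) (j+1) ((j:ℤ)-1))*q^3*r^6*x*z + (2)*(ASum sv (r^2) (j+1) ((j:ℤ)-1))*q^5*r^4*x*z + (-2)*(ASum sv (r^2) (j+1) ((j:ℤ)-1))*r*x*z + (2)*(ASum sv (r^2) (j+1) ((j:ℤ)-1))*r^3*x*z + (2)*(ASum sv (r^2) (j+1) ((j:ℤ)-2))*q^2*r^3*x*y*z - (ASum sv (r^2) (j+1) ((j:ℤ)-2))*q^3*r^3*x^2 - (ASum sv (r^2) (j+1) ((j:ℤ)-2))*q^3*r^3*z^2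 + (2)*(ASum sv (r^2) (j+1) ((j:ℤ)-2))*q^3*r^4*x*y*z - (ASum sv (r^2) (j+1) ((j:ℤ)-2))*q^4*r^4*x^2 - (ASum sv (r^2) (j+1) ((j:ℤ)-2))*q^4*r^4*z^2 + (-2)*(ASum sv (r^2) (j+1) ((j:ℤ)-3))*q*r^6*x*z + (-2)*(ASum sv (r^2) (j+1) ((j:ℤ)-3))*r^5*x*z - (ASum sv (r^2) (j+1) ((j:ℤ)))*q*r*x^2 - (ASum sv (r^2) (j+1) ((j:ℤ)))*q*r*z^2 - (ASum sv (r^2) (j+1) ((j:ℤ)))*q^2*r^2*x^2 - (ASum sv (r^2) (j+1) ((j:ℤ)))*q^2*r^2*z^2 - (ASum sv (r^2) (j+1) ((j:ℤ)))*q^3*r^3*x^2 - (ASum sv (r^2) (j+1) ((j:ℤ)))*q^3*r^3*z^2 + (ASum sv (r^2) (j+1) ((j:ℤ)))*q^4*r^2*x^2 + (ASum sv (r^2) (j+1) ((j:ℤ)))*q^4*r^2*z^2 - (ASum sv (r^2) (j+1) ((j:ℤ)))*x^2 - (ASum sv (r^2) (j+1) ((j:ℤ)))*z^2 + (-2)*(ASum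 sv (r^2) (j+1) ((j:ℤ)+1))*q^2*r*x*z + (2)*(ASum sv (r^2) (j+1) ((j:ℤ)+1))*q^2*r^3*x*z + (-2)*(ASum sv (r^2) (j+1) ((j:ℤ)+1))*q^3*r^2*x*z + (2)*(ASum sv (r^2) (j+1) ((j:ℤ)+1))*q^3*r^4*x*z + (-2)*(ASum sv (r^2) (j+1) ((j:ℤ)+1))*q^5*r^2*x*z - q^(2*j)*q^2*(sv ((j:ℤ))) + (2)*q^(2*j)*q^3*r^2*(sv ((j:ℤ)-1))*x*z + q^(2*j)*q^3*(sv ((j:ℤ)+1))*x*z + q^(2*j)*q^4*r^2*(sv ((j:ℤ)))*x^2 + q^(2*j)*q^4*r^2*(sv ((j:ℤ)))*z^2 + q^(2*j)*q^4*(sv ((j:ℤ)+2)) + (-2)*q^(2*j)*q^5*(sv ((j:ℤ)-1))*x*z + (2)*q^(2*j)*q^5*(sv ((j:ℤ)))*x*y*z + (-2)*q^(2*j)*q^5*(sv ((j:ℤ)+1))*x*z + (-2)*q^(2*j)*q^6*r*(sv ((j:ℤ)-1))*x*z + (2)*q^(2*j)*q^6*r*(sv ((j:ℤ)))*x*y*z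 + (-2)*q^(2*j)*q^6*r*(sv ((j:ℤ)+1))*x*z + q^(2*j)*q^6*r^2*(sv ((j:ℤ)-1))*x^2*y + q^(2*j)*q^6*r^2*(sv ((j:ℤ)-1))*y*z^2 - q^(2*j)*q^6*r^2*(sv ((j:ℤ)-2))*x^2 - q^(2*j)*q^6*r^2*(sv ((j:ℤ)-2))*z^2 - q^(2*j)*q^6*r^2*(sv ((j:ℤ)))*x^2 - q^(2*j)*q^6*r^2*(sv ((j:ℤ)))*z^2 - q^(2*j)*q^6*(sv ((j:ℤ)))*x^2 - q^(2*j)*q^6*(sv ((j:ℤ)))*z^2 + q^(2*j)*q^6*(sv ((j:ℤ)+1))*x^2*y + q^(2*j)*q^6*(sv ((j:ℤ)+1))*y*z^2 - q^(2*j)*q^6*(sv ((j:ℤ)+2))*x^2 - q^(2*j)*q^6*(sv ((j:ℤ)+2))*z^2 - q^(2*j)*q^7*r*(sv ((j:ℤ)))*x^2 - q^(2*j)*q^7*r*(sv ((j:ℤ)))*z^2 + q^(2*j)*q^7*r*(sv ((j:ℤ)+1))*x^2*y + q^(2*j)*q^7*r*(sv ((j:ℤ)+1))*y*z^2 - q^(2*j)*q^7*r*(sv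 ((j:ℤ)+2))*x^2 - q^(2*j)*q^7*r*(sv ((j:ℤ)+2))*z^2 + q^(2*j)*q^7*r^3*(sv ((j:ℤ)-1))*x^2*y + q^(2*j)*q^7*r^3*(sv ((j:ℤ)-1))*y*z^2 - q^(2*j)*q^7*r^3*(sv ((j:ℤ)-2))*x^2 - q^(2*j)*q^7*r^3*(sv ((j:ℤ)-2))*z^2 - q^(2*j)*q^7*r^3*(sv ((j:ℤ)))*x^2 - q^(2*j)*q^7*r^3*(sv ((j:ℤ)))*z^2 - r^(2*j)*q*r*(sv ((j:ℤ)-2)) - r^(2*j)*q*r^2*(sv ((j:ℤ)-1))*x*z + r^(2*j)*q*r^3*(sv ((j:ℤ))) + (-2)*r^(2*j)*q*r^6*(sv ((j:ℤ)+1))*x*z + r^(2*j)*q^2*r^2*(sv ((j:ℤ)-1))*x^2*y + r^(2*j)*q^2*r^2*(sv ((j:ℤ)-1))*y*z^2 - r^(2*j)*q^2*r^2*(sv ((j:ℤ)-2))*x^2 - r^(2*j)*q^2*r^2*(sv ((j:ℤ)-2))*z^2 + r^(2*j)*q^2*r^2*(sv ((j:ℤ))) - r^(2*j)*q^2*r^2*(sv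 ((j:ℤ)))*x^2 - r^(2*j)*q^2*r^2*(sv ((j:ℤ)))*z^2 + (2)*r^(2*j)*q^2*r^3*(sv ((j:ℤ)))*x*y*z - r^(2*j)*q^2*r^3*(sv ((j:ℤ)+1))*x*z - r^(2*j)*q^2*r^4*(sv ((j:ℤ)+2)) + (-2)*r^(2*j)*q^2*r^5*(sv ((j:ℤ)-1))*x*z + r^(2*j)*q^3*r^3*(sv ((j:ℤ)-1))*x^2*y + r^(2*j)*q^3*r^3*(sv ((j:ℤ)-1))*y*z^2 - r^(2*j)*q^3*r^3*(sv ((j:ℤ)-2))*x^2 - r^(2*j)*q^3*r^3*(sv ((j:ℤ)-2))*z^2 - r^(2*j)*q^3*r^3*(sv ((j:ℤ)))*x^2 - r^(2*j)*q^3*r^3*(sv ((j:ℤ)))*z^2 + (2)*r^(2*j)*q^3*r^4*(sv ((j:ℤ)))*x*y*z + (-2)*r^(2*j)*q^3*r^6*(sv ((j:ℤ)-1))*x*z - r^(2*j)*q^4*r^4*(sv ((j:ℤ)))*x^2 - r^(2*j)*q^4*r^4*(sv ((j:ℤ)))*z^2 + (2)*r^(2*j)*q^5*r^4*(sv ((j:ℤ)-1))*x*z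 - r^(2*j)*r*(sv ((j:ℤ)-1))*x*z + r^(2*j)*r^2*(sv ((j:ℤ))) + (-2)*r^(2*j)*r^5*(sv ((j:ℤ)+1))*x*z - r^(2*j)*(sv ((j:ℤ)-2)) + (2)*q*r^2*(sv ((j:ℤ)+1))*x*z + (-2)*q*r^4*(sv ((j:ℤ)-1))*x*z + (-2)*q*(sv ((j:ℤ)+1))*x*z + (2)*q^2*r*(sv ((j:ℤ)-1))*x*z + (2)*q^2*r*(sv ((j:ℤ)+1))*x*z + q^2*r^2*(sv ((j:ℤ)))*x^2 + q^2*r^2*(sv ((j:ℤ)))*z^2 + (-2)*q^2*r^3*(sv ((j:ℤ)+1))*x*z + q^2*(sv ((j:ℤ)))*x^2 + q^2*(sv ((j:ℤ)))*z^2 + (2)*q^3*r^2*(sv ((j:ℤ)-1))*x*z + (2)*q^3*r^2*(sv ((j:ℤ)+1))*x*z + (-2)*q^3*r^4*(sv ((j:ℤ)+1))*x*z - q^4*r^2*(sv ((j:ℤ)))*x^2 - q^4*r^2*(sv ((j:ℤ)))*z^2 + (2)*q^5*r^2*(sv ((j:ℤ)+1))*x*z + (-2)*r^3*(sv ((j:ℤ)-1))*x*z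 - (sv ((j:ℤ)))*x^2 - (sv ((j:ℤ)))*z^2) * hqr
    + ((-2)*q^5*r^2*x*z + q^6*r^2*x^2*y + q^6*r^2*y*z^2) * hshift_Aq_m1
    + (-q^6*r^2*x^2 - q^6*r^2*z^2) * hshift_Aq_m2
    + (-q^2*r^2*x^2 - q^2*r^2*z^2 + q^3*r^3*x^2 + q^3*r^3*z^2 + (2)*q^5*r^2*x*y*z - q^6*r^2*x^2 - q^6*r^2*z^2 - q^6*r^4*x^2 - q^6*r^4*z^2) * hshift_Aq_0
    + ((-2)*q*r^2*x*z + (2)*q^2*r^3*x*z + (-2)*q^5*r^2*x*z + q^6*r^4*x^2*y + q^6*r^4*y*z^2) * hshift_Aq_1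
    + (-q^6*r^4*x^2 - q^6*r^4*z^2) * hshift_Aq_2
    + ((-2)*q^2*r^5*x*z) * hshift_Ar_m1
    + ((2)*q^4*r^3*x*y*z - q^5*r^3*x^2 - q^5*r^3*z^2) * hshift_Ar_0
    + ((-2)*q^2*r*x*z + (2)*q^2*r^3*x*z + q^4*r^2*x^2*y + q^4*r^2*y*z^2 + (-2)*q^4*r^5*x*z + (-2)*q^5*r^2*x*z + (2)*q^6*r^3*x*z) * hshift_Ar_1
    + (-q^4*r^2*x^2 - q^4*r^2*z^2) * hshift_Ar_2
    + ((2)*q^3*x*z - q^4*x^2*y - q^4*y*z^2) * hstrip_Aq2_m1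
    + (q^4*x^2 + q^4*z^2) * hstrip_Aq2_m2
    + (-q*r*x^2 - q*r*z^2 + (-2)*q^3*x*y*z + q^4*x^2 + q^4*z^2) * hstrip_Aq2_0
    + ((2)*q^3*x*z + (-2)*r*x*z) * hstrip_Aq2_1
    + (q^2*x^2 + q^2*z^2) * hstrip_Aq3_0
    + ((2)*q*x*z) * hstrip_Aq3_1
    + ((2)*r^3*x*z) * hstrip_Ar2_m1
    + ((-2)*q^2*r*x*y*z + q^3*r*x^2 + q^3*r*z^2) * hstrip_Ar2_0
    + (-q^2*x^2*y - q^2*y*z^2 + (2)*q^3*x*z + (-2)*r*x*z) * hstrip_Ar2_1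
    + ((2)*r*x*z) * hstrip_Ar3_1
    + (x^2 + z^2) * hstrip_Ar3_2
    + ((-2)*q^5*r^2*x*z) * hyA_Aq_0
    + (-q^6*r^4*x^2 - q^6*r^4*z^2) * hyA_Aq_1
    + ((-2)*q^4*r^3*x*z) * hyA_Ar_0
    + (-q^4*r^2*x^2 - q^4*r^2*z^2) * hyA_Ar_1
    + (q^(2*j)*q^6*r^2*x^2 + q^(2*j)*q^6*r^2*z^2 - r^(2*j)*q^2*r^2 + r^(2*j)*q^2*r^2*x^2 + r^(2*j)*q^2*r^2*z^2 - q^4*x^2 - q^4*z^2 + q^6*r^2*x^2 + q^6*r^2*z^2) * hys_m1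
    + ((2)*q^(2*j)*q^5*x*z + r^(2*j)*q^2*r^3*x*z + (-2)*q^2*r*x*z + (-2)*q^3*x*z + (2)*q^4*r^3*x*z + (2)*q^5*r^2*x*z) * hys_0
    + (-q^(2*j)*q^6 + q^(2*j)*q^6*x^2 + q^(2*j)*q^6*z^2 + r^(2*j)*q^2*r^4 - q^2*x^2 - q^2*z^2 + q^4*r^2*x^2 + q^4*r^2*z^2 + q^6*r^4*x^2 + q^6*r^4*z^2) * hys_1
    + (q^(2*j)*q^7*x*z) * hys_2
    + (q^(2*j)*q^8) * hys_3

lemma transferG {R : Type*} [CommRing R] (q r x y z : R) (sv : ℤ → R) (j : ℕ)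
    (hqr : q * r = 1) (hy : ∀ b : ℤ, y * sv b = sv (b + 1) + sv (b - 1))
    (hneg : ∀ a : ℤ, sv (-a) = -sv (a - 2)) :
    CGdef q r x y z sv (j+2) = (q - r^3) * CFdef q r x y z sv (j+1)
      + r^2 * y * CGdef q r x y z sv (j+1)
      + 2 * (1 - r^2) * (x*z) * (sv ((j:ℤ)+2) - sv ((j:ℤ))) - CGdef q r x y z sv j := by
  simp only [CFdef, CGdef, Nat.cast_add, Nat.cast_one, Nat.cast_ofNat,
    show j+1+1 = j+2 from rfl, show j+2+1 = j+3 from rfl,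
    show ((j:ℤ)+2)+2 = (j:ℤ)+4 by ring, show ((j:ℤ)+2)-2 = ((j:ℤ)) by ring,
    show ((j:ℤ)+2)+1 = (j:ℤ)+3 by ring, show ((j:ℤ)+2)-1 = (j:ℤ)+1 by ring,
    show ((j:ℤ)+1)+2 = (j:ℤ)+3 by ring, show ((j:ℤ)+1)-2 = (j:ℤ)-1 by ring,
    show ((j:ℤ)+1)+1 = (j:ℤ)+2 by ring, show ((j:ℤ)+1)-1 = ((j:ℤ)) by ring]
  have hshift_Aq_m1 : ASum sv (q^2) (j+1) ((j:ℤ)-1) = (q^2) * ASum sv (q^2) (j+1) ((j:ℤ)-3) + sv ((j:ℤ)-1) + q^(2*j+2) * sv ((j:ℤ)+1) := by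
    have h := ASum_shift sv (q^2) (j+1) ((j:ℤ)-1)
    rw [show ((j:ℤ)-1) - 2 = ((j:ℤ)-3) by ring, show ((j:ℤ)-1) - 2*((j+1:ℕ):ℤ) = -(((j:ℤ)+3)) by push_cast; ring, hneg, show ((j:ℤ)+3) - 2 = ((j:ℤ)+1) by ring] at h
    linear_combination h
  have hshift_Aq_0 : ASum sv (q^2) (j+1) ((j:ℤ)) = (q^2) * ASum sv (q^2) (j+1) ((j:ℤ)-2) + sv ((j:ℤ)) + q^(2*j+2) * sv ((j:ℤ)) := by
    have h := ASum_shift sv (q^2) (j+1) ((j:ℤ))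
    rw [show ((j:ℤ)) - 2*((j+1:ℕ):ℤ) = -(((j:ℤ)+2)) by push_cast; ring, hneg, show ((j:ℤ)+2) - 2 = ((j:ℤ)) by ring] at h
    linear_combination h
  have hshift_Aq_1 : ASum sv (q^2) (j+1) ((j:ℤ)+1) = (q^2) * ASum sv (q^2) (j+1) ((j:ℤ)-1) + sv ((j:ℤ)+1) + q^(2*j+2) * sv ((j:ℤ)-1) := by
    have h := ASum_shift sv (q^2) (j+1) ((j:ℤ)+1)
    rw [show ((j:ℤ)+1) - 2 = ((j:ℤ)-1) by ring, show ((j:ℤ)+1) - 2*((j+1:ℕ):ℤ) = -(((j:ℤ)+1)) by push_cast; ring, hneg, show ((j:ℤ)+1) - 2 = ((j:ℤ)-1) by ring] at h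
    linear_combination h
  have hshift_Aq_2 : ASum sv (q^2) (j+1) ((j:ℤ)+2) = (q^2) * ASum sv (q^2) (j+1) ((j:ℤ)) + sv ((j:ℤ)+2) + q^(2*j+2) * sv ((j:ℤ)-2) := by
    have h := ASum_shift sv (q^2) (j+1) ((j:ℤ)+2)
    rw [show ((j:ℤ)+2) - 2 = ((j:ℤ)) by ring, show ((j:ℤ)+2) - 2*((j+1:ℕ):ℤ) = -(((j:ℤ))) by push_cast; ring, hneg] at h
    linear_combination h
  have hshift_Ar_m1 : ASum sv (r^2) (j+1) ((j:ℤ)-1) = (r^2) * ASum sv (r^2) (j+1) ((j:ℤ)-3) + sv ((j:ℤ)-1) + r^(2*j+2) * sv ((j:ℤ)+1) := by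
    have h := ASum_shift sv (r^2) (j+1) ((j:ℤ)-1)
    rw [show ((j:ℤ)-1) - 2 = ((j:ℤ)-3) by ring, show ((j:ℤ)-1) - 2*((j+1:ℕ):ℤ) = -(((j:ℤ)+3)) by push_cast; ring, hneg, show ((j:ℤ)+3) - 2 = ((j:ℤ)+1) by ring] at h
    linear_combination h
  have hshift_Ar_0 : ASum sv (r^2) (j+1) ((j:ℤ)) = (r^2) * ASum sv (r^2) (j+1) ((j:ℤ)-2) + sv ((j:ℤ)) + r^(2*j+2) * sv ((j:ℤ)) := by
    have h := ASum_shift sv (r^2) (j+1) ((j:ℤ))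
    rw [show ((j:ℤ)) - 2*((j+1:ℕ):ℤ) = -(((j:ℤ)+2)) by push_cast; ring, hneg, show ((j:ℤ)+2) - 2 = ((j:ℤ)) by ring] at h
    linear_combination h
  have hshift_Ar_1 : ASum sv (r^2) (j+1) ((j:ℤ)+1) = (r^2) * ASum sv (r^2) (j+1) ((j:ℤ)-1) + sv ((j:ℤ)+1) + r^(2*j+2) * sv ((j:ℤ)-1) := by
    have h := ASum_shift sv (r^2) (j+1) ((j:ℤ)+1)
    rw [show ((j:ℤ)+1) - 2 = ((j:ℤ)-1) by ring, show ((j:ℤ)+1) - 2*((j+1:ℕ):ℤ) = -(((j:ℤ)+1)) by push_cast; ring, hneg, show ((j:ℤ)+1) - 2 = ((j:ℤ)-1) by ring] at h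
    linear_combination h
  have hshift_Ar_2 : ASum sv (r^2) (j+1) ((j:ℤ)+2) = (r^2) * ASum sv (r^2) (j+1) ((j:ℤ)) + sv ((j:ℤ)+2) + r^(2*j+2) * sv ((j:ℤ)-2) := by
    have h := ASum_shift sv (r^2) (j+1) ((j:ℤ)+2)
    rw [show ((j:ℤ)+2) - 2 = ((j:ℤ)) by ring, show ((j:ℤ)+2) - 2*((j+1:ℕ):ℤ) = -(((j:ℤ))) by push_cast; ring, hneg] at h
    linear_combination h
  have hstrip_Aq2_m1 : ASum sv (q^2) (j+2) ((j:ℤ)-1) = sv ((j:ℤ)-1) + (q^2) * ASum sv (q^2) (j+1) ((j:ℤ)-3) := by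
    have h := ASum_bot sv (q^2) (j+1) ((j:ℤ)-1)
    rw [show ((j:ℤ)-1) - 2 = ((j:ℤ)-3) by ring] at h
    exact h
  have hstrip_Aq2_0 : ASum sv (q^2) (j+2) ((j:ℤ)) = sv ((j:ℤ)) + (q^2) * ASum sv (q^2) (j+1) ((j:ℤ)-2) := by
    have h := ASum_bot sv (q^2) (j+1) ((j:ℤ))
    exact h
  have hstrip_Aq2_1 : ASum sv (q^2) (j+2) ((j:ℤ)+1) = sv ((j:ℤ)+1) + (q^2) * ASum sv (q^2) (j+1) ((j:ℤ)-1) := by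
    have h := ASum_bot sv (q^2) (j+1) ((j:ℤ)+1)
    rw [show ((j:ℤ)+1) - 2 = ((j:ℤ)-1) by ring] at h
    exact h
  have hstrip_Aq3_1 : ASum sv (q^2) (j+3) ((j:ℤ)+1) = sv ((j:ℤ)+1) + (q^2) * ASum sv (q^2) (j+2) ((j:ℤ)-1) := by
    have h := ASum_bot sv (q^2) (j+2) ((j:ℤ)+1)
    rw [show ((j:ℤ)+1) - 2 = ((j:ℤ)-1) by ring] at h
    exact h
  have hstrip_Aq3_2 : ASum sv (q^2) (j+3) ((j:ℤ)+2) = sv ((j:ℤ)+2) + (q^2) * ASum sv (q^2) (j+2) ((j:ℤ)) := by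
    have h := ASum_bot sv (q^2) (j+2) ((j:ℤ)+2)
    rw [show ((j:ℤ)+2) - 2 = ((j:ℤ)) by ring] at h
    exact h
  have hstrip_Ar2_m1 : ASum sv (r^2) (j+2) ((j:ℤ)-1) = sv ((j:ℤ)-1) + (r^2) * ASum sv (r^2) (j+1) ((j:ℤ)-3) := by
    have h := ASum_bot sv (r^2) (j+1) ((j:ℤ)-1)
    rw [show ((j:ℤ)-1) - 2 = ((j:ℤ)-3) by ring] at h
    exact h
  have hstrip_Ar2_0 : ASum sv (r^2) (j+2) ((j:ℤ)) = sv ((j:ℤ)) + (r^2) * ASum sv (r^2) (j+1) ((j:ℤ)-2) := by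
    have h := ASum_bot sv (r^2) (j+1) ((j:ℤ))
    exact h
  have hstrip_Ar2_1 : ASum sv (r^2) (j+2) ((j:ℤ)+1) = sv ((j:ℤ)+1) + (r^2) * ASum sv (r^2) (j+1) ((j:ℤ)-1) := by
    have h := ASum_bot sv (r^2) (j+1) ((j:ℤ)+1)
    rw [show ((j:ℤ)+1) - 2 = ((j:ℤ)-1) by ring] at h
    exact h
  have hstrip_Ar3_1 : ASum sv (r^2) (j+3) ((j:ℤ)+1) = sv ((j:ℤ)+1) + (r^2) * ASum sv (r^2) (j+2) ((j:ℤ)-1) := by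
    have h := ASum_bot sv (r^2) (j+2) ((j:ℤ)+1)
    rw [show ((j:ℤ)+1) - 2 = ((j:ℤ)-1) by ring] at h
    exact h
  have hstrip_Ar3_2 : ASum sv (r^2) (j+3) ((j:ℤ)+2) = sv ((j:ℤ)+2) + (r^2) * ASum sv (r^2) (j+2) ((j:ℤ)) := by
    have h := ASum_bot sv (r^2) (j+2) ((j:ℤ)+2)
    rw [show ((j:ℤ)+2) - 2 = ((j:ℤ)) by ring] at h
    exact h
  have hyA_Aq_0 : y * (ASum sv (q^2) (j+1) ((j:ℤ))) = ASum sv (q^2) (j+1) ((j:ℤ)+1) + ASum sv (q^2) (j+1) ((j:ℤ)-1) := by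
    have h := ASum_y sv y hy (q^2) (j+1) ((j:ℤ))
    exact h
  have hyA_Aq_1 : y * (ASum sv (q^2) (j+1) ((j:ℤ)+1)) = ASum sv (q^2) (j+1) ((j:ℤ)+2) + ASum sv (q^2) (j+1) ((j:ℤ)) := by
    have h := ASum_y sv y hy (q^2) (j+1) ((j:ℤ)+1)
    rw [show ((j:ℤ)+1) + 1 = ((j:ℤ)+2) by ring, show ((j:ℤ)+1) - 1 = ((j:ℤ)) by ring] at h
    exact h
  have hyA_Ar_0 : y * (ASum sv (r^2) (j+1) ((j:ℤ))) = ASum sv (r^2) (j+1) ((j:ℤ)+1) + ASum sv (r^2) (j+1) ((j:ℤ)-1) := by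
    have h := ASum_y sv y hy (r^2) (j+1) ((j:ℤ))
    exact h
  have hyA_Ar_1 : y * (ASum sv (r^2) (j+1) ((j:ℤ)+1)) = ASum sv (r^2) (j+1) ((j:ℤ)+2) + ASum sv (r^2) (j+1) ((j:ℤ)) := by
    have h := ASum_y sv y hy (r^2) (j+1) ((j:ℤ)+1)
    rw [show ((j:ℤ)+1) + 1 = ((j:ℤ)+2) by ring, show ((j:ℤ)+1) - 1 = ((j:ℤ)) by ring] at h
    exact h
  have hys_m1 : y * sv ((j:ℤ)-1) = sv ((j:ℤ)) + sv ((j:ℤ)-2) := by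
    have h := hy ((j:ℤ)-1)
    rw [show ((j:ℤ)-1) + 1 = ((j:ℤ)) by ring, show ((j:ℤ)-1) - 1 = ((j:ℤ)-2) by ring] at h
    exact h
  have hys_0 : y * sv ((j:ℤ)) = sv ((j:ℤ)+1) + sv ((j:ℤ)-1) := by
    have h := hy ((j:ℤ))
    exact h
  have hys_1 : y * sv ((j:ℤ)+1) = sv ((j:ℤ)+2) + sv ((j:ℤ)) := by
    have h := hy ((j:ℤ)+1)
    rw [show ((j:ℤ)+1) + 1 = ((j:ℤ)+2) by ring, show ((j:ℤ)+1) - 1 = ((j:ℤ)) by ring] at h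
    exact h
  have hys_2 : y * sv ((j:ℤ)+2) = sv ((j:ℤ)+3) + sv ((j:ℤ)+1) := by
    have h := hy ((j:ℤ)+2)
    rw [show ((j:ℤ)+2) + 1 = ((j:ℤ)+3) by ring, show ((j:ℤ)+2) - 1 = ((j:ℤ)+1) by ring] at h
    exact h
  linear_combination (norm := ring1) (-(ASum sv (q^2) (j+1) ((j:ℤ)-1))*q*x^2 - (ASum sv (q^2) (j+1) ((j:ℤ)-1))*q*z^2 - (ASum sv (q^2) (j+1) ((j:ℤ)-1))*q^2*r*x^2 - (ASum sv (q^2) (j+1) ((j:ℤ)-1))*q^2*r*z^2 + (2)*(ASum sv (q^2) (j+1) ((j:ℤ)-1))*q^2*r^2*x*y*z + (2)*(ASum sv (q^2) (j+1) ((j:ℤ)-1))*q^3*r^3*x*y*z + (ASum sv (q^2) (j+1) ((j:ℤ)-1))*q^3*r^4*x^2 + (ASum sv (q^2) (j+1) ((j:ℤ)-1))*q^3*r^4*z^2 - (ASum sv (q^2) (j+1) ((j:ℤ)-1))*q^5*r^6*x^2 - (ASum sv (q^2) (j+1) ((j:ℤ)-1))*q^5*r^6*z^2 + (ASum sv (q^2)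 (j+1) ((j:ℤ)-2))*q^3*r^2*x^2*y + (ASum sv (q^2) (j+1) ((j:ℤ)-2))*q^3*r^2*y*z^2 + (-2)*(ASum sv (q^2) (j+1) ((j:ℤ)-2))*q^3*r^3*x*z + (ASum sv (q^2) (j+1) ((j:ℤ)-2))*q^4*r^3*x^2*y + (ASum sv (q^2) (j+1) ((j:ℤ)-2))*q^4*r^3*y*z^2 + (-2)*(ASum sv (q^2) (j+1) ((j:ℤ)-2))*q^4*r^4*x*z - (ASum sv (q^2) (j+1) ((j:ℤ)-3))*q^4*r^3*x^2 - (ASum sv (q^2) (j+1) ((j:ℤ)-3))*q^4*r^3*z^2 - (ASum sv (q^2) (j+1) ((j:ℤ)-3))*q^5*r^4*x^2 - (ASum sv (q^2) (j+1) ((j:ℤ)-3))*q^5*r^4*z^2 + (-2)*(ASum sv (q^2) (j+1) ((j:ℤ)))*q*r*x*z + (-2)*(ASum sv (q^2) (j+1) ((j:ℤ)))*q^2*r^2*x*z + (2)*(ASum sv (q^2) (j+1) ((j:ℤ)))*q^2*r^4*x*z + (-2)*(ASum sv (q^2) (j+1) ((j:ℤ)))*q^3*r^3*x*z + (-2)*(ASum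 sv (q^2) (j+1) ((j:ℤ)))*x*z - (ASum sv (q^2) (j+1) ((j:ℤ)+1))*q*r^2*x^2 - (ASum sv (q^2) (j+1) ((j:ℤ)+1))*q*r^2*z^2 - (ASum sv (q^2) (j+1) ((j:ℤ)+1))*q^2*r^3*x^2 - (ASum sv (q^2) (j+1) ((j:ℤ)+1))*q^2*r^3*z^2 + (ASum sv (q^2) (j+1) ((j:ℤ)+1))*q^3*r^6*x^2 + (ASum sv (q^2) (j+1) ((j:ℤ)+1))*q^3*r^6*z^2 + (2)*(ASum sv (r^2) (j+1) ((j:ℤ)-1))*q*r^5*x*y*z - (ASum sv (r^2) (j+1) ((j:ℤ)-1))*q*r^6*x^2 - (ASum sv (r^2) (j+1) ((j:ℤ)-1))*q*r^6*z^2 + (ASum sv (r^2) (j+1) ((j:ℤ)-1))*q^2*r^3*x^2 + (ASum sv (r^2) (j+1) ((j:ℤ)-1))*q^2*r^3*z^2 - (ASum sv (r^2) (j+1) ((j:ℤ)-1))*r*x^2 - (ASum sv (r^2) (j+1) ((j:ℤ)-1))*r*z^2 + (2)*(ASum sv (r^2) (j+1) ((j:ℤ)-1))*r^4*x*y*z -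 (ASum sv (r^2) (j+1) ((j:ℤ)-1))*r^5*x^2 - (ASum sv (r^2) (j+1) ((j:ℤ)-1))*r^5*z^2 + (2)*(ASum sv (r^2) (j+1) ((j:ℤ)-2))*q*r^3*x*z + (-2)*(ASum sv (r^2) (j+1) ((j:ℤ)-2))*q*r^5*x*z + (ASum sv (r^2) (j+1) ((j:ℤ)-2))*q*r^6*x^2*y + (ASum sv (r^2) (j+1) ((j:ℤ)-2))*q*r^6*y*z^2 + (-2)*(ASum sv (r^2) (j+1) ((j:ℤ)-2))*q*r^7*x*z + (2)*(ASum sv (r^2) (j+1) ((j:ℤ)-2))*q^2*r^4*x*z + (-2)*(ASum sv (r^2) (j+1) ((j:ℤ)-2))*r^4*x*z + (ASum sv (r^2) (j+1) ((j:ℤ)-2))*r^5*x^2*y + (ASum sv (r^2) (j+1) ((j:ℤ)-2))*r^5*y*z^2 + (-2)*(ASum sv (r^2) (j+1) ((j:ℤ)-2))*r^6*x*z - (ASum sv (r^2) (j+1) ((j:ℤ)-3))*q*r^6*x^2 - (ASum sv (r^2) (j+1) ((j:ℤ)-3))*q*r^6*z^2 - (ASum sv (r^2) (j+1) ((j:ℤ)-3))*r^5*x^2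 - (ASum sv (r^2) (j+1) ((j:ℤ)-3))*r^5*z^2 + (-2)*(ASum sv (r^2) (j+1) ((j:ℤ)))*q*r*x*z + (-2)*(ASum sv (r^2) (j+1) ((j:ℤ)))*q^2*r^2*x*z + (-2)*(ASum sv (r^2) (j+1) ((j:ℤ)))*x*z - (ASum sv (r^2) (j+1) ((j:ℤ)+1))*q^2*r*x^2 - (ASum sv (r^2) (j+1) ((j:ℤ)+1))*q^2*r*z^2 - q^(2*j)*q*(sv ((j:ℤ)-1)) - q^(2*j)*q^2*r*(sv ((j:ℤ)-1)) + (2)*q^(2*j)*q^2*r^2*(sv ((j:ℤ)-1))*x*y*z + (-2)*q^(2*j)*q^2*r^2*(sv ((j:ℤ)-2))*x*z + (-2)*q^(2*j)*q^2*r^2*(sv ((j:ℤ)))*x*z + q^(2*j)*q^2*(sv ((j:ℤ)))*x*z + q^(2*j)*q^3*r*(sv ((j:ℤ)))*x*z + q^(2*j)*q^3*r^2*(sv ((j:ℤ)))*x^2*y + q^(2*j)*q^3*r^2*(sv ((j:ℤ)))*y*z^2 + q^(2*j)*q^3*r^2*(sv ((j:ℤ)+1)) - q^(2*j)*q^3*r^2*(sv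 ((j:ℤ)+1))*x^2 - q^(2*j)*q^3*r^2*(sv ((j:ℤ)+1))*z^2 + (2)*q^(2*j)*q^3*r^3*(sv ((j:ℤ)-1))*x*y*z + (-2)*q^(2*j)*q^3*r^3*(sv ((j:ℤ)-2))*x*z + (-2)*q^(2*j)*q^3*r^3*(sv ((j:ℤ)))*x*z + q^(2*j)*q^3*(sv ((j:ℤ)+1)) + q^(2*j)*q^4*r*(sv ((j:ℤ)+1)) - q^(2*j)*q^4*r^2*(sv ((j:ℤ)+2))*x*z + q^(2*j)*q^4*r^3*(sv ((j:ℤ)))*x^2*y + q^(2*j)*q^4*r^3*(sv ((j:ℤ)))*y*z^2 - q^(2*j)*q^4*r^3*(sv ((j:ℤ)+1))*x^2 - q^(2*j)*q^4*r^3*(sv ((j:ℤ)+1))*z^2 + (-2)*q^(2*j)*q^4*r^4*(sv ((j:ℤ)))*x*z - q^(2*j)*q^5*r^2*(sv ((j:ℤ)+3)) - q^(2*j)*q^5*r^4*(sv ((j:ℤ)+1))*x^2 - q^(2*j)*q^5*r^4*(sv ((j:ℤ)+1))*z^2 - q^(2*j)*q^5*r^6*(sv ((j:ℤ)-1))*x^2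 - q^(2*j)*q^5*r^6*(sv ((j:ℤ)-1))*z^2 + (2)*r^(2*j)*q*r^3*(sv ((j:ℤ)))*x*z + (2)*r^(2*j)*q*r^5*(sv ((j:ℤ)-1))*x*y*z + (-2)*r^(2*j)*q*r^5*(sv ((j:ℤ)-2))*x*z + (-2)*r^(2*j)*q*r^5*(sv ((j:ℤ)))*x*z - r^(2*j)*q*r^6*(sv ((j:ℤ)-1))*x^2 - r^(2*j)*q*r^6*(sv ((j:ℤ)-1))*z^2 + r^(2*j)*q*r^6*(sv ((j:ℤ)))*x^2*y + r^(2*j)*q*r^6*(sv ((j:ℤ)))*y*z^2 - r^(2*j)*q*r^6*(sv ((j:ℤ)+1))*x^2 - r^(2*j)*q*r^6*(sv ((j:ℤ)+1))*z^2 + (-2)*r^(2*j)*q*r^7*(sv ((j:ℤ)))*x*z + r^(2*j)*q^2*r^3*(sv ((j:ℤ)-1))*x^2 + r^(2*j)*q^2*r^3*(sv ((j:ℤ)-1))*z^2 + (2)*r^(2*j)*q^2*r^4*(sv ((j:ℤ)))*x*z - r^(2*j)*r*(sv ((j:ℤ)-1)) + r^(2*j)*r^2*(sv ((j:ℤ)))*x*z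 + r^(2*j)*r^3*(sv ((j:ℤ)+1)) + (2)*r^(2*j)*r^4*(sv ((j:ℤ)-1))*x*y*z + (-2)*r^(2*j)*r^4*(sv ((j:ℤ)-2))*x*z + (-2)*r^(2*j)*r^4*(sv ((j:ℤ)))*x*z - r^(2*j)*r^5*(sv ((j:ℤ)-1))*x^2 - r^(2*j)*r^5*(sv ((j:ℤ)-1))*z^2 + r^(2*j)*r^5*(sv ((j:ℤ)))*x^2*y + r^(2*j)*r^5*(sv ((j:ℤ)))*y*z^2 - r^(2*j)*r^5*(sv ((j:ℤ)+1))*x^2 - r^(2*j)*r^5*(sv ((j:ℤ)+1))*z^2 + (-2)*r^(2*j)*r^6*(sv ((j:ℤ)))*x*z + (2)*q*r*(sv ((j:ℤ)))*x*z + q*r^2*(sv ((j:ℤ)-1))*x^2 + q*r^2*(sv ((j:ℤ)-1))*z^2 + q*r^2*(sv ((j:ℤ)+1))*x^2 + q*r^2*(sv ((j:ℤ)+1))*z^2 + (-2)*q*r^5*(sv ((j:ℤ)))*x*z + q^2*r*(sv ((j:ℤ)+1))*x^2 + q^2*r*(sv ((j:ℤ)+1))*z^2 + (2)*q^2*r^2*(sv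 ((j:ℤ)))*x*z + q^2*r^3*(sv ((j:ℤ)+1))*x^2 + q^2*r^3*(sv ((j:ℤ)+1))*z^2 + (-2)*q^2*r^4*(sv ((j:ℤ)))*x*z - q^3*r^4*(sv ((j:ℤ)-1))*x^2 - q^3*r^4*(sv ((j:ℤ)-1))*z^2 - q^3*r^6*(sv ((j:ℤ)+1))*x^2 - q^3*r^6*(sv ((j:ℤ)+1))*z^2 - r*(sv ((j:ℤ)+1))*x^2 - r*(sv ((j:ℤ)+1))*z^2 + (2)*r^2*(sv ((j:ℤ)))*x*z + (-2)*r^4*(sv ((j:ℤ)))*x*z) * hqr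
    + (-q^4*r^5*x^2 - q^4*r^5*z^2) * hshift_Aq_m1
    + (q^3*r^4*x^2*y + q^3*r^4*y*z^2 + (-2)*q^3*r^5*x*z) * hshift_Aq_0
    + (-q*r^2*x^2 - q*r^2*z^2 + (2)*q^2*r^4*x*y*z + q^3*r^6*x^2 + q^3*r^6*z^2 - q^4*r^7*x^2 - q^4*r^7*z^2) * hshift_Aq_1
    + ((-2)*q^2*r^4*x*z) * hshift_Aq_2
    + (-q^2*r^5*x^2 - q^2*r^5*z^2) * hshift_Ar_m1
    + ((-2)*q^2*r^4*x*z + q^2*r^5*x^2*y + q^2*r^5*y*z^2 + (-2)*q^2*r^6*x*z + (2)*q^3*r^3*x*z) * hshift_Ar_0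
    + (-q^2*r*x^2 - q^2*r*z^2 + (2)*q^2*r^4*x*y*z - q^2*r^5*x^2 - q^2*r^5*z^2 + q^3*r^2*x^2 + q^3*r^2*z^2) * hshift_Ar_1
    + ((-2)*q^2*r^4*x*z) * hshift_Ar_2
    + (q^2*r^3*x^2 + q^2*r^3*z^2) * hstrip_Aq2_m1
    + (-q*r^2*x^2*y - q*r^2*y*z^2 + (2)*q*r^3*x*z) * hstrip_Aq2_0
    + ((-2)*r^2*x*y*z) * hstrip_Aq2_1
    + (q*x^2 + q*z^2) * hstrip_Aq3_1
    + ((2)*x*z) * hstrip_Aq3_2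
    + (r^3*x^2 + r^3*z^2) * hstrip_Ar2_m1
    + ((-2)*q*r*x*z + (2)*r^2*x*z - r^3*x^2*y - r^3*y*z^2 + (2)*r^4*x*z) * hstrip_Ar2_0
    + (-q*x^2 - q*z^2 + (-2)*r^2*x*y*z + r^3*x^2 + r^3*z^2) * hstrip_Ar2_1
    + (r*x^2 + r*z^2) * hstrip_Ar3_1
    + ((2)*x*z) * hstrip_Ar3_2
    + (-q^3*r^4*x^2 - q^3*r^4*z^2) * hyA_Aq_0
    + ((-2)*q^2*r^4*x*z) * hyA_Aq_1
    + (-q^2*r^5*x^2 - q^2*r^5*z^2) * hyA_Ar_0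
    + ((-2)*q^2*r^4*x*z) * hyA_Ar_1
    + ((2)*q^(2*j)*q^2*r^2*x*z + (2)*r^(2*j)*r^4*x*z) * hys_m1
    + (-q^(2*j)*q^3*r^2 + q^(2*j)*q^3*r^2*x^2 + q^(2*j)*q^3*r^2*z^2 - r^(2*j)*r^5 + r^(2*j)*r^5*x^2 + r^(2*j)*r^5*z^2 - q*r^2*x^2 - q*r^2*z^2 + q^2*r^5*x^2 + q^2*r^5*z^2 + q^3*r^4*x^2 + q^3*r^4*z^2 - r^3*x^2 - r^3*z^2) * hys_0
    + (q^(2*j)*q^4*r^2*x*z + r^(2*j)*r^6*x*z + (4)*q^2*r^4*x*z + (-2)*r^2*x*z) * hys_1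
    + (q^(2*j)*q^5*r^2 + r^(2*j)*r^7) * hys_2


set_option maxHeartbeats 4000000 in
open LaurentPolynomial in
theorem X1_star_Tn_formula (S : ℤ → Polynomial ℤ)
    (hS0 : S 0 = 1) (hS1 : S 1 = Polynomial.X)
    (hS : ∀ n : ℤ, S (n + 1) = Polynomial.X * S n - S (n - 1))
    (F G : ℕ → MvPolynomial (Fin 3) (LaurentPolynomial ℂ)) :
    let x := (MvPolynomial.X 0 : MvPolynomial (Fin 3) (LaurentPolynomial ℂ))
    let y := (MvPolynomial.X 1 : MvPolynomial (Fin 3) (LaurentPolynomial ℂ))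
    let z := (MvPolynomial.X 2 : MvPolynomial (Fin 3) (LaurentPolynomial ℂ))
    let tp : ℤ → MvPolynomial (Fin 3) (LaurentPolynomial ℂ) := fun k => MvPolynomial.C (T k)
    let sv : ℤ → MvPolynomial (Fin 3) (LaurentPolynomial ℂ) :=
      fun m => Polynomial.aeval y (S m)
    F 0 = -tp 4 * y - tp 2 * x * z →
    G 0 = -tp 2 - tp (-2) →
    (∀ n : ℕ, F (n + 1) = tp 4 * y * F n + (tp (-2) - tp 6) * G n
        + (1 - tp 4) * (x ^ 2 + z ^ 2) * y ^ n) →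
    (∀ n : ℕ, G (n + 1) = (tp 2 - tp (-6)) * F n + tp (-4) * y * G n
        + 2 * (1 - tp (-4)) * x * z * y ^ n) →
    ∀ n : ℕ, 1 ≤ n →
      (∑ k ∈ Finset.range (n + 1), (S (n : ℤ) - S ((n : ℤ) - 2)).coeff k • F k) =
        -tp (4 * n + 4) * sv ((n : ℤ) + 1) - tp (-4 * n) * sv ((n : ℤ) - 1)
        + tp (4 * n) * sv ((n : ℤ) - 1) + tp (-4 * n + 4) * sv ((n : ℤ) - 3)
        - tp (4 * n + 2) * x * z * sv (n : ℤ) + tp (-4 * n + 2) * x * z * sv ((n : ℤ) - 2)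
        + (1 - tp (4 * n)) *
            ∑ k ∈ Finset.range n, tp (-4 * k) * (x ^ 2 + z ^ 2) * sv ((n : ℤ) - 2 * k - 1)
        + 2 * (1 - tp (4 * n)) *
            ∑ k ∈ Finset.range n, tp (-4 * k - 2) * x * z * sv ((n : ℤ) - 2 * k - 2) := by
  intro x y z tp sv hF0 hG0 hF hG n hn
  -- tp basics
  have htpa : ∀ a b : ℤ, tp a * tp b = tp (a + b) := by
    intro a b
    show (MvPolynomial.C (T a)) * (MvPolynomial.C (T b)) = MvPolynomial.C (T (a + b))
    rw [← map_mul, ← LaurentPolynomial.T_add]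
  have htp0 : tp 0 = 1 := by
    show MvPolynomial.C (T 0) = 1
    rw [LaurentPolynomial.T_zero, map_one]
  have hqr : tp 2 * tp (-2) = 1 := by rw [htpa]; norm_num [htp0]
  have htppow : ∀ (a : ℤ) (k : ℕ), tp (a * k) = tp a ^ k := by
    intro a k
    induction k with
    | zero => simpa using htp0
    | succ k ih =>
      rw [show a * ((k+1 : ℕ) : ℤ) = a * k + a by push_cast; ring, ← htpa, ih, pow_succ]
  have htp4 : tp 4 = tp 2 ^ 2 := by have h := htppow 2 2; norm_num at h; exact h
  have htp6 : tp 6 = tp 2 ^ 3 := by have h := htppow 2 3; norm_num at h; exact h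
  have htpm4 : tp (-4) = tp (-2) ^ 2 := by have h := htppow (-2) 2; norm_num at h; exact h
  have htpm6 : tp (-6) = tp (-2) ^ 3 := by have h := htppow (-2) 3; norm_num at h; exact h
  -- sv basics
  have hy : ∀ b : ℤ, y * sv b = sv (b + 1) + sv (b - 1) := by
    intro b
    have h : sv (b + 1) = y * sv b - sv (b - 1) := by
      show Polynomial.aeval y (S (b+1)) = y * Polynomial.aeval y (S b) - Polynomial.aeval y (S (b-1))
      rw [hS b]
      simp only [map_sub, map_mul, Polynomial.aeval_X]
    linear_combination -h
  have hneg' : ∀ a : ℤ, sv (-a) = -sv (a - 2) := by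
    intro a
    show Polynomial.aeval y (S (-a)) = -Polynomial.aeval y (S (a - 2))
    rw [Sneg S hS0 hS1 hS a, map_neg]
  have hsv0 : sv 0 = 1 := by show Polynomial.aeval y (S 0) = 1; rw [hS0, map_one]
  have hsv1 : sv 1 = y := by show Polynomial.aeval y (S 1) = y; rw [hS1, Polynomial.aeval_X]
  have hsvm1 : sv (-1) = 0 := by
    show Polynomial.aeval y (S (-1)) = 0
    rw [Sm1 S hS0 hS1 hS, map_zero]
  have hsvm2 : sv (-2) = -1 := by
    show Polynomial.aeval y (S (-2)) = -1
    rw [Sm2 S hS0 hS1 hS]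
    simp
  have hsv2 : sv 2 = y * y - 1 := by
    have h := hy 1
    rw [show (1:ℤ) + 1 = 2 by norm_num, show (1:ℤ) - 1 = 0 by norm_num, hsv0, hsv1] at h
    linear_combination -h
  have hsv3 : sv 3 = y * y * y - 2 * y := by
    have h := hy 2
    rw [show (2:ℤ) + 1 = 3 by norm_num, show (2:ℤ) - 1 = 1 by norm_num, hsv1, hsv2] at h
    linear_combination -h
  have hsvm3 : sv (-3) = -y := by
    have h := hneg' 3
    rw [show (3:ℤ) - 2 = 1 by norm_num, hsv1] at h
    exact h
  -- coefficient bounds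
  have hTco : ∀ (m k : ℕ), m < k → (S (m : ℤ) - S ((m : ℤ) - 2)).coeff k = 0 := by
    intro m k hk
    rw [Polynomial.coeff_sub, Scoeff S hS0 hS1 hS m k hk]
    rcases Nat.lt_or_ge m 2 with h2 | h2
    · interval_cases m
      · rw [show ((0:ℕ) : ℤ) - 2 = -2 by norm_num, Sm2 S hS0 hS1 hS]
        have hk0 : k ≠ 0 := by omega
        simp [Polynomial.coeff_one, hk0]
      · rw [show ((1:ℕ) : ℤ) - 2 = -1 by norm_num, Sm1 S hS0 hS1 hS]
        simp
    · rw [show ((m:ℕ) : ℤ) - 2 = ((m - 2 : ℕ) : ℤ) by omega,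
          Scoeff S hS0 hS1 hS (m-2) k (by omega)]
      ring
  have hAS2 : ∀ (c : MvPolynomial (Fin 3) (LaurentPolynomial ℂ)) (a : ℤ),
      ASum sv c 2 a = sv a + c * sv (a - 2) := by
    intro c a
    have h := ASum_bot sv c 1 a
    rw [ASum_one] at h
    exact h
  have hstepF : ∀ j : ℕ,
      (∑ k ∈ Finset.range (j+2+1+1), (S ((j+2+1 : ℕ) : ℤ) - S (((j+2+1 : ℕ) : ℤ) - 2)).coeff k • F k)
        = tp 4 * y * (∑ k ∈ Finset.range (j+1+1+1), (S ((j+1+1 : ℕ) : ℤ) - S (((j+1+1 : ℕ) : ℤ) - 2)).coeff k • F k)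
          + (tp (-2) - tp 6) * (∑ k ∈ Finset.range (j+1+1+1), (S ((j+1+1 : ℕ) : ℤ) - S (((j+1+1 : ℕ) : ℤ) - 2)).coeff k • G k)
          + ((1 - tp 4) * (x^2 + z^2)) * (sv ((j+1+1 : ℕ) : ℤ) - sv (((j+1+1 : ℕ) : ℤ) - 2))
          - (∑ k ∈ Finset.range (j+1+1), (S ((j+1 : ℕ) : ℤ) - S (((j+1 : ℕ) : ℤ) - 2)).coeff k • F k) := by
    intro j
    have hTT : (S ((j+2+1 : ℕ) : ℤ) - S (((j+2+1 : ℕ) : ℤ) - 2))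
        = Polynomial.X * (S ((j+1+1 : ℕ) : ℤ) - S (((j+1+1 : ℕ) : ℤ) - 2)) - (S ((j+1 : ℕ) : ℤ) - S (((j+1 : ℕ) : ℤ) - 2)) := by
      have e1 := hS (((j+1+1 : ℕ) : ℤ))
      rw [show ((j+1+1 : ℕ) : ℤ) + 1 = ((j+2+1 : ℕ) : ℤ) by push_cast; ring,
          show ((j+1+1 : ℕ) : ℤ) - 1 = ((j+1 : ℕ) : ℤ) by push_cast; ring] at e1
      have e2 := hS ((j : ℕ) : ℤ)
      rw [show ((j : ℕ) : ℤ) + 1 = ((j+1 : ℕ) : ℤ) by push_cast; ring] at e2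
      rw [show ((j+2+1 : ℕ) : ℤ) - 2 = ((j+1 : ℕ) : ℤ) by push_cast; ring,
          show ((j+1+1 : ℕ) : ℤ) - 2 = ((j : ℕ) : ℤ) by push_cast; ring,
          show ((j+1 : ℕ) : ℤ) - 2 = ((j : ℕ) : ℤ) - 1 by push_cast; ring]
      linear_combination e1 - e2
    have hA : (∑ k ∈ Finset.range (j+2+1+1), (S ((j+2+1 : ℕ) : ℤ) - S (((j+2+1 : ℕ) : ℤ) - 2)).coeff k • F k)
        = (∑ k ∈ Finset.range (j+2+1+1), (Polynomial.X * (S ((j+1+1 : ℕ) : ℤ) - S (((j+1+1 : ℕ) : ℤ) - 2))).coeff k • F k)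
          - (∑ k ∈ Finset.range (j+2+1+1), (S ((j+1 : ℕ) : ℤ) - S (((j+1 : ℕ) : ℤ) - 2)).coeff k • F k) := by
      rw [← Finset.sum_sub_distrib]
      refine Finset.sum_congr rfl fun k _ => ?_
      rw [hTT, Polynomial.coeff_sub, sub_smul]
    have hB : (∑ k ∈ Finset.range (j+2+1+1), (S ((j+1 : ℕ) : ℤ) - S (((j+1 : ℕ) : ℤ) - 2)).coeff k • F k)
        = (∑ k ∈ Finset.range (j+1+1), (S ((j+1 : ℕ) : ℤ) - S (((j+1 : ℕ) : ℤ) - 2)).coeff k • F k) := by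
      refine (Finset.sum_subset (Finset.range_subset_range.mpr (by omega)) fun k _ hk => ?_).symm
      rw [hTco (j+1) k (by simp only [Finset.mem_range] at hk; omega), zero_smul]
    have hC : (∑ k ∈ Finset.range (j+2+1+1), (Polynomial.X * (S ((j+1+1 : ℕ) : ℤ) - S (((j+1+1 : ℕ) : ℤ) - 2))).coeff k • F k)
        = ∑ k ∈ Finset.range (j+2+1), (S ((j+1+1 : ℕ) : ℤ) - S (((j+1+1 : ℕ) : ℤ) - 2)).coeff k • F (k+1) := by
      rw [Finset.sum_range_succ', Polynomial.mul_coeff_zero, Polynomial.coeff_X_zero]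
      simp only [zero_mul, zero_smul, add_zero]
      refine Finset.sum_congr rfl fun k _ => ?_
      rw [Polynomial.coeff_X_mul]
    have hD : (∑ k ∈ Finset.range (j+2+1), (S ((j+1+1 : ℕ) : ℤ) - S (((j+1+1 : ℕ) : ℤ) - 2)).coeff k • F (k+1))
        = tp 4 * y * (∑ k ∈ Finset.range (j+2+1), (S ((j+1+1 : ℕ) : ℤ) - S (((j+1+1 : ℕ) : ℤ) - 2)).coeff k • F k)
          + (tp (-2) - tp 6) * (∑ k ∈ Finset.range (j+2+1), (S ((j+1+1 : ℕ) : ℤ) - S (((j+1+1 : ℕ) : ℤ) - 2)).coeff k • G k)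
          + ((1 - tp 4) * (x^2 + z^2)) * (∑ k ∈ Finset.range (j+2+1), (S ((j+1+1 : ℕ) : ℤ) - S (((j+1+1 : ℕ) : ℤ) - 2)).coeff k • y^k) := by
      rw [Finset.mul_sum, Finset.mul_sum, Finset.mul_sum, ← Finset.sum_add_distrib,
        ← Finset.sum_add_distrib]
      refine Finset.sum_congr rfl fun k _ => ?_
      rw [hF k]
      simp only [zsmul_eq_mul]
      ring
    have hE : (∑ k ∈ Finset.range (j+2+1), (S ((j+1+1 : ℕ) : ℤ) - S (((j+1+1 : ℕ) : ℤ) - 2)).coeff k • y^k)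
        = sv ((j+1+1 : ℕ) : ℤ) - sv (((j+1+1 : ℕ) : ℤ) - 2) := by
      have hdeg1 : ((S ((j+1+1 : ℕ) : ℤ) - S (((j+1+1 : ℕ) : ℤ) - 2))).natDegree < j+2+1 := by
        have hle := Polynomial.natDegree_le_iff_coeff_eq_zero.mpr (hTco (j+1+1))
        omega
      rw [← Polynomial.aeval_eq_sum_range' hdeg1 y]
      show _ = Polynomial.aeval y (S ((j+1+1 : ℕ) : ℤ)) - Polynomial.aeval y (S (((j+1+1 : ℕ) : ℤ) - 2))
      rw [map_sub]
    rw [show j+1+1+1 = j+2+1 from rfl] at *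
    rw [hA, hB, hC, hD, hE]

  have hstepG : ∀ j : ℕ,
      (∑ k ∈ Finset.range (j+2+1+1), (S ((j+2+1 : ℕ) : ℤ) - S (((j+2+1 : ℕ) : ℤ) - 2)).coeff k • G k)
        = tp (-4) * y * (∑ k ∈ Finset.range (j+1+1+1), (S ((j+1+1 : ℕ) : ℤ) - S (((j+1+1 : ℕ) : ℤ) - 2)).coeff k • G k)
          + (tp 2 - tp (-6)) * (∑ k ∈ Finset.range (j+1+1+1), (S ((j+1+1 : ℕ) : ℤ) - S (((j+1+1 : ℕ) : ℤ) - 2)).coeff k • F k)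
          + (2 * (1 - tp (-4)) * x * z) * (sv ((j+1+1 : ℕ) : ℤ) - sv (((j+1+1 : ℕ) : ℤ) - 2))
          - (∑ k ∈ Finset.range (j+1+1), (S ((j+1 : ℕ) : ℤ) - S (((j+1 : ℕ) : ℤ) - 2)).coeff k • G k) := by
    intro j
    have hTT : (S ((j+2+1 : ℕ) : ℤ) - S (((j+2+1 : ℕ) : ℤ) - 2))
        = Polynomial.X * (S ((j+1+1 : ℕ) : ℤ) - S (((j+1+1 : ℕ) : ℤ) - 2)) - (S ((j+1 : ℕ) : ℤ) - S (((j+1 : ℕ) : ℤ) - 2)) := by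
      have e1 := hS (((j+1+1 : ℕ) : ℤ))
      rw [show ((j+1+1 : ℕ) : ℤ) + 1 = ((j+2+1 : ℕ) : ℤ) by push_cast; ring,
          show ((j+1+1 : ℕ) : ℤ) - 1 = ((j+1 : ℕ) : ℤ) by push_cast; ring] at e1
      have e2 := hS ((j : ℕ) : ℤ)
      rw [show ((j : ℕ) : ℤ) + 1 = ((j+1 : ℕ) : ℤ) by push_cast; ring] at e2
      rw [show ((j+2+1 : ℕ) : ℤ) - 2 = ((j+1 : ℕ) : ℤ) by push_cast; ring,
          show ((j+1+1 : ℕ) : ℤ) - 2 = ((j : ℕ) : ℤ) by push_cast; ring,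
          show ((j+1 : ℕ) : ℤ) - 2 = ((j : ℕ) : ℤ) - 1 by push_cast; ring]
      linear_combination e1 - e2
    have hA : (∑ k ∈ Finset.range (j+2+1+1), (S ((j+2+1 : ℕ) : ℤ) - S (((j+2+1 : ℕ) : ℤ) - 2)).coeff k • G k)
        = (∑ k ∈ Finset.range (j+2+1+1), (Polynomial.X * (S ((j+1+1 : ℕ) : ℤ) - S (((j+1+1 : ℕ) : ℤ) - 2))).coeff k • G k)
          - (∑ k ∈ Finset.range (j+2+1+1), (S ((j+1 : ℕ) : ℤ) - S (((j+1 : ℕ) : ℤ) - 2)).coeff k • G k) := by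
      rw [← Finset.sum_sub_distrib]
      refine Finset.sum_congr rfl fun k _ => ?_
      rw [hTT, Polynomial.coeff_sub, sub_smul]
    have hB : (∑ k ∈ Finset.range (j+2+1+1), (S ((j+1 : ℕ) : ℤ) - S (((j+1 : ℕ) : ℤ) - 2)).coeff k • G k)
        = (∑ k ∈ Finset.range (j+1+1), (S ((j+1 : ℕ) : ℤ) - S (((j+1 : ℕ) : ℤ) - 2)).coeff k • G k) := by
      refine (Finset.sum_subset (Finset.range_subset_range.mpr (by omega)) fun k _ hk => ?_).symm
      rw [hTco (j+1) k (by simp only [Finset.mem_range] at hk; omega), zero_smul]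
    have hC : (∑ k ∈ Finset.range (j+2+1+1), (Polynomial.X * (S ((j+1+1 : ℕ) : ℤ) - S (((j+1+1 : ℕ) : ℤ) - 2))).coeff k • G k)
        = ∑ k ∈ Finset.range (j+2+1), (S ((j+1+1 : ℕ) : ℤ) - S (((j+1+1 : ℕ) : ℤ) - 2)).coeff k • G (k+1) := by
      rw [Finset.sum_range_succ', Polynomial.mul_coeff_zero, Polynomial.coeff_X_zero]
      simp only [zero_mul, zero_smul, add_zero]
      refine Finset.sum_congr rfl fun k _ => ?_
      rw [Polynomial.coeff_X_mul]
    have hD : (∑ k ∈ Finset.range (j+2+1), (S ((j+1+1 : ℕ) : ℤ) - S (((j+1+1 : ℕ) : ℤ) - 2)).coeff k • G (k+1))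
        = tp (-4) * y * (∑ k ∈ Finset.range (j+2+1), (S ((j+1+1 : ℕ) : ℤ) - S (((j+1+1 : ℕ) : ℤ) - 2)).coeff k • G k)
          + (tp 2 - tp (-6)) * (∑ k ∈ Finset.range (j+2+1), (S ((j+1+1 : ℕ) : ℤ) - S (((j+1+1 : ℕ) : ℤ) - 2)).coeff k • F k)
          + (2 * (1 - tp (-4)) * x * z) * (∑ k ∈ Finset.range (j+2+1), (S ((j+1+1 : ℕ) : ℤ) - S (((j+1+1 : ℕ) : ℤ) - 2)).coeff k • y^k) := by
      rw [Finset.mul_sum, Finset.mul_sum, Finset.mul_sum, ← Finset.sum_add_distrib,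
        ← Finset.sum_add_distrib]
      refine Finset.sum_congr rfl fun k _ => ?_
      rw [hG k]
      simp only [zsmul_eq_mul]
      ring
    have hE : (∑ k ∈ Finset.range (j+2+1), (S ((j+1+1 : ℕ) : ℤ) - S (((j+1+1 : ℕ) : ℤ) - 2)).coeff k • y^k)
        = sv ((j+1+1 : ℕ) : ℤ) - sv (((j+1+1 : ℕ) : ℤ) - 2) := by
      have hdeg1 : ((S ((j+1+1 : ℕ) : ℤ) - S (((j+1+1 : ℕ) : ℤ) - 2))).natDegree < j+2+1 := by
        have hle := Polynomial.natDegree_le_iff_coeff_eq_zero.mpr (hTco (j+1+1))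
        omega
      rw [← Polynomial.aeval_eq_sum_range' hdeg1 y]
      show _ = Polynomial.aeval y (S ((j+1+1 : ℕ) : ℤ)) - Polynomial.aeval y (S (((j+1+1 : ℕ) : ℤ) - 2))
      rw [map_sub]
    rw [show j+1+1+1 = j+2+1 from rfl] at *
    rw [hA, hB, hC, hD, hE]

  -- main two-step induction
  have main : ∀ j : ℕ,
      (∑ k ∈ Finset.range (j+1+1), (S ((j+1 : ℕ) : ℤ) - S (((j+1 : ℕ) : ℤ) - 2)).coeff k • F k) = CFdef (tp 2) (tp (-2)) x y z sv j ∧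
      (∑ k ∈ Finset.range (j+1+1), (S ((j+1 : ℕ) : ℤ) - S (((j+1 : ℕ) : ℤ) - 2)).coeff k • G k) = CGdef (tp 2) (tp (-2)) x y z sv j := by
    intro j
    induction j using Nat.twoStepInduction with
    | zero =>
      have hT1 : (S ((0+1 : ℕ) : ℤ) - S (((0+1 : ℕ) : ℤ) - 2)) = Polynomial.X := by
        rw [show ((0+1 : ℕ) : ℤ) = 1 by norm_num, show (1:ℤ) - 2 = -1 by norm_num,
          hS1, Sm1 S hS0 hS1 hS]
        ring
      have hsum : ∀ H : ℕ → MvPolynomial (Fin 3) (LaurentPolynomial ℂ),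
          (∑ k ∈ Finset.range (0+1+1), (S ((0+1 : ℕ) : ℤ) - S (((0+1 : ℕ) : ℤ) - 2)).coeff k • H k) = H 1 := by
        intro H
        rw [hT1]
        rw [Finset.sum_range_succ, Finset.sum_range_succ, Finset.range_zero,
          Finset.sum_empty, Polynomial.coeff_X_zero, Polynomial.coeff_X_one]
        simp
      have hF1 : F 1 = tp 4 * y * F 0 + (tp (-2) - tp 6) * G 0
          + (1 - tp 4) * (x ^ 2 + z ^ 2) := by
        have h := hF 0
        norm_num at h
        exact h
      have hG1 : G 1 = (tp 2 - tp (-6)) * F 0 + tp (-4) * y * G 0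
          + 2 * (1 - tp (-4)) * x * z := by
        have h := hG 0
        norm_num at h
        exact h
      constructor
      · rw [hsum F, hF1, hF0, hG0, htp4, htp6]
        simp only [CFdef]
        norm_num [ASum_one]
        simp only [hsv0, hsv1, hsv2, hsvm1, hsvm2]
        linear_combination ((-1) + (tp 2)^2) * hqr
      · rw [hsum G, hG1, hF0, hG0, htp4, htpm4, htpm6]
        simp only [CGdef]
        norm_num [ASum_one]
        simp only [hsv0, hsv1, hsvm1]
        linear_combination ((tp 2)*(tp (-2))^2*y + (tp (-2))^2*x*z) * hqr
    | one =>
      have hS2 : S 2 = Polynomial.X * Polynomial.X - 1 := by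
        have h := hS 1
        norm_num at h
        rw [hS0, hS1] at h
        exact h
      have hT2 : (S ((1+1 : ℕ) : ℤ) - S (((1+1 : ℕ) : ℤ) - 2))
          = Polynomial.X * Polynomial.X - Polynomial.C 2 := by
        rw [show ((1+1 : ℕ) : ℤ) = 2 by norm_num, show (2:ℤ) - 2 = 0 by norm_num, hS2, hS0,
          show (Polynomial.C 2 : Polynomial ℤ) = 2 from map_ofNat _ 2]
        ring
      have hco : ∀ k : ℕ, (Polynomial.X * Polynomial.X - Polynomial.C 2
            : Polynomial ℤ).coeff k = if k = 0 then -2 else if k = 2 then 1 else 0 := by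
        intro k
        rw [Polynomial.coeff_sub, Polynomial.coeff_C,
          show (Polynomial.X * Polynomial.X : Polynomial ℤ) = Polynomial.X ^ 2 by ring,
          Polynomial.coeff_X_pow]
        rcases Nat.lt_or_ge k 3 with h3 | h3
        · interval_cases k <;> norm_num
        · have h1 : ¬ (k = 0) := by omega
          have h2 : ¬ (2 = k) := by omega
          have h2' : ¬ (k = 2) := by omega
          simp [h1, h2, h2']
      have hsum : ∀ H : ℕ → MvPolynomial (Fin 3) (LaurentPolynomial ℂ),
          (∑ k ∈ Finset.range (1+1+1), (S ((1+1 : ℕ) : ℤ) - S (((1+1 : ℕ) : ℤ) - 2)).coeff k • H k) = H 2 - 2 * H 0 := by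
        intro H
        rw [hT2]
        rw [Finset.sum_range_succ, Finset.sum_range_succ, Finset.sum_range_succ,
          Finset.range_zero, Finset.sum_empty, hco 0, hco 1, hco 2]
        simp only [zsmul_eq_mul]
        norm_num
        ring
      have hF1 : F 1 = tp 4 * y * F 0 + (tp (-2) - tp 6) * G 0
          + (1 - tp 4) * (x ^ 2 + z ^ 2) := by
        have h := hF 0; norm_num at h; exact h
      have hG1 : G 1 = (tp 2 - tp (-6)) * F 0 + tp (-4) * y * G 0
          + 2 * (1 - tp (-4)) * x * z := by
        have h := hG 0; norm_num at h; exact h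
      have hF2 : F 2 = tp 4 * y * F 1 + (tp (-2) - tp 6) * G 1
          + (1 - tp 4) * (x ^ 2 + z ^ 2) * y := by
        have h := hF 1; norm_num at h; exact h
      have hG2 : G 2 = (tp 2 - tp (-6)) * F 1 + tp (-4) * y * G 1
          + 2 * (1 - tp (-4)) * x * z * y := by
        have h := hG 1; norm_num at h; exact h
      constructor
      · rw [hsum F, hF2, hF1, hG1, hF0, hG0, htp4, htp6, htpm4, htpm6]
        simp only [CFdef]
        norm_num [hAS2]
        simp only [hsv0, hsv1, hsv2, hsv3, hsvm1, hsvm2, hsvm3]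
        linear_combination ((tp 2)*(tp (-2))^3*y + (tp 2)^2*(tp (-2))*x*z + (tp 2)^2*(tp (-2))^2*y + (-2)*(tp 2)^2*y - (tp 2)^3*(tp (-2))^2*x*z - (tp 2)^4*(tp (-2))^2*y + (tp 2)^4*y + (tp (-2))^3*x*z) * hqr
      · rw [hsum G, hG2, hF1, hG1, hF0, hG0, htp4, htp6, htpm4, htpm6]
        simp only [CGdef]
        norm_num [hAS2]
        simp only [hsv0, hsv1, hsv2, hsv3, hsvm1, hsvm2, hsvm3]
        linear_combination ((-2)*(tp 2) - (tp 2)*(tp (-2))^2 + (tp 2)*(tp (-2))^2*x^2 + (tp 2)*(tp (-2))^2*z^2 + (tp 2)*(tp (-2))^4*y^2 - (tp 2)^2*(tp (-2)) + (tp 2)^2*(tp (-2))^2*x*y*z - (tp 2)^2*(tp (-2))^3 + (tp 2)^3 - (tp 2)^3*(tp (-2))^2 + (tp 2)^3*(tp (-2))^2*y^2 + (-2)*(tp (-2)) + (tp (-2))*x^2 + (tp (-2))*z^2 + (tp (-2))^3 + (tp (-2))^4*x*y*z) * hqr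
    | more j ih1 ih2 =>
      have tF := transferF (tp 2) (tp (-2)) x y z sv j hqr hy hneg'
      have tG := transferG (tp 2) (tp (-2)) x y z sv j hqr hy hneg'
      have hsF := hstepF j
      have hsG := hstepG j
      rw [ih2.1, ih2.2, ih1.1,
          show (((j+1+1 : ℕ)) : ℤ) = (j : ℤ) + 2 by push_cast; ring] at hsF
      rw [ih2.1, ih2.2, ih1.2,
          show (((j+1+1 : ℕ)) : ℤ) = (j : ℤ) + 2 by push_cast; ring] at hsG
      rw [show ((j : ℤ) + 2) - 2 = ((j : ℤ)) by ring] at hsF hsG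
      constructor
      · rw [hsF, htp4, htp6]
        linear_combination -tF
      · rw [hsG, htpm4, htpm6]
        linear_combination -tG
  -- final conversion
  obtain ⟨j, rfl⟩ : ∃ j : ℕ, n = j + 1 := ⟨n - 1, by omega⟩
  have hmain := (main j).1
  rw [hmain]
  -- now prove CFdef ... j = stated RHS
  have c1 : tp (4 * ((j+1 : ℕ) : ℤ) + 4) = tp 2 ^ (2*j+4) := by
    rw [show 4 * ((j+1 : ℕ) : ℤ) + 4 = 2 * ((2*j+4 : ℕ) : ℤ) by push_cast; ring, htppow]
  have c2 : tp (-4 * ((j+1 : ℕ) : ℤ)) = tp (-2) ^ (2*j+2) := by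
    rw [show -4 * ((j+1 : ℕ) : ℤ) = -2 * ((2*j+2 : ℕ) : ℤ) by push_cast; ring, htppow]
  have c3 : tp (4 * ((j+1 : ℕ) : ℤ)) = tp 2 ^ (2*j+2) := by
    rw [show 4 * ((j+1 : ℕ) : ℤ) = 2 * ((2*j+2 : ℕ) : ℤ) by push_cast; ring, htppow]
  have c4 : tp (-4 * ((j+1 : ℕ) : ℤ) + 4) = tp (-2) ^ (2*j) := by
    rw [show -4 * ((j+1 : ℕ) : ℤ) + 4 = -2 * ((2*j : ℕ) : ℤ) by push_cast; ring, htppow]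
  have c5 : tp (4 * ((j+1 : ℕ) : ℤ) + 2) = tp 2 ^ (2*j+3) := by
    rw [show 4 * ((j+1 : ℕ) : ℤ) + 2 = 2 * ((2*j+3 : ℕ) : ℤ) by push_cast; ring, htppow]
  have c6 : tp (-4 * ((j+1 : ℕ) : ℤ) + 2) = tp (-2) ^ (2*j+1) := by
    rw [show -4 * ((j+1 : ℕ) : ℤ) + 2 = -2 * ((2*j+1 : ℕ) : ℤ) by push_cast; ring, htppow]
  have s1 : (∑ k ∈ Finset.range (j+1), tp (-4 * k) * (x ^ 2 + z ^ 2)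
        * sv (((j+1 : ℕ) : ℤ) - 2 * k - 1))
      = (x ^ 2 + z ^ 2) * ASum sv (tp (-2) ^ 2) (j+1) ((j : ℤ)) := by
    rw [ASum, Finset.mul_sum]
    refine Finset.sum_congr rfl fun k _ => ?_
    rw [show ((j+1 : ℕ) : ℤ) - 2 * (k : ℤ) - 1 = (j : ℤ) - 2 * (k : ℤ) by push_cast; ring,
        show (-4 : ℤ) * (k : ℤ) = -2 * ((2*k : ℕ) : ℤ) by push_cast; ring, htppow]
    rw [pow_mul]
    ring
  have s2 : (∑ k ∈ Finset.range (j+1), tp (-4 * k - 2) * x * z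
        * sv (((j+1 : ℕ) : ℤ) - 2 * k - 2))
      = x * z * (tp (-2) * ASum sv (tp (-2) ^ 2) (j+1) ((j : ℤ) - 1)) := by
    rw [ASum, Finset.mul_sum, Finset.mul_sum]
    refine Finset.sum_congr rfl fun k _ => ?_
    rw [show ((j+1 : ℕ) : ℤ) - 2 * (k : ℤ) - 2 = ((j : ℤ) - 1) - 2 * (k : ℤ) by push_cast; ring,
        show (-4 : ℤ) * (k : ℤ) - 2 = -2 * ((2*k+1 : ℕ) : ℤ) by push_cast; ring, htppow]
    rw [pow_succ, pow_mul]
    ring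
  have refl1 := ASum_reflect sv (tp 2) (tp (-2)) hqr hneg' (j+1) ((j : ℤ))
  rw [show 2 * ((j+1 : ℕ) : ℤ) - (j : ℤ) - 4 = (j : ℤ) - 2 by push_cast; ring] at refl1
  have refl2 := ASum_reflect sv (tp 2) (tp (-2)) hqr hneg' (j+1) ((j : ℤ) - 1)
  rw [show 2 * ((j+1 : ℕ) : ℤ) - ((j : ℤ) - 1) - 4 = (j : ℤ) - 1 by push_cast; ring] at refl2
  rw [s1, s2, c1, c2, c3, c4, c5, c6,
      show (((j+1 : ℕ)) : ℤ) + 1 = (j : ℤ) + 2 by push_cast; ring,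
      show (((j+1 : ℕ)) : ℤ) - 1 = ((j : ℤ)) by push_cast; ring,
      show (((j+1 : ℕ)) : ℤ) - 2 = (j : ℤ) - 1 by push_cast; ring,
      show (((j+1 : ℕ)) : ℤ) - 3 = (j : ℤ) - 2 by push_cast; ring,
      show (((j+1 : ℕ)) : ℤ) = (j : ℤ) + 1 by push_cast; ring]
  simp only [CFdef]
  linear_combination (x^2 + z^2) * refl1 + (2 * x * z * (tp (-2))) * refl2
    + (-2 * x * z * (tp 2) * (ASum sv ((tp 2)^2) (j+1) ((j : ℤ) - 1))) * hqr
end
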